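/- arXiv:1901.06539 — 10 statements merged into one kernel-verified Lean document; each statement's English description precedes it below -/
import Mathlib

section
/- Let E₁ and E₂ be categories with finite limits and H : E₁ → E₂ a finite-limit-preserving functor. Then the assignment (X₁, X₂) ↦ (X₁, HX₁ × X₂) underlies a cartesian comonad G on the product category E₁ × E₂, and the comma category (E₂ ↓ H) is isomorphic to the category (E₁ × E₂)_G of G-coalgebras. -/
/-!
A `G`-coalgebra structure `a` on `(X₁, X₂)` has first component `𝟙 X₁` by the counit law, and
its second component `X₂ ⟶ HX₁ ⨯ X₂` has second projection `𝟙 X₂`, so it is `⟨u, 𝟙⟩` for a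
unique `u : X₂ ⟶ HX₁`; coassociativity then holds automatically, and coalgebra morphisms are
exactly the commuting squares. So coalgebras are the objects `(X₂, X₁, u)` of `(E₂ ↓ H)`.

`G` is cartesian because its components are the projection `X ↦ X₁`, which preserves all
limits, and `X ↦ HX₁ ⨯ X₂`, the pairing of `H ∘ pr₁` and `pr₂` followed by the binary product
functor `E₂ × E₂ ⥤ E₂`, which is right adjoint to the diagonal.
-/

open CategoryTheory CategoryTheory.Limits

universe v₁ u₁ v₂ u₂

variable {E₁ : Type u₁} [Category.{v₁} E₁] {E₂ : Type u₂} [Category.{v₂} E₂]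

@[simps]
noncomputable def glueFunctor [HasBinaryProducts E₂] (H : E₁ ⥤ E₂) : E₁ × E₂ ⥤ E₁ × E₂ where
  obj X := (X.1, H.obj X.1 ⨯ X.2)
  map f := (f.1, prod.map (H.map f.1) f.2)
  map_id X := by dsimp; rw [H.map_id, prod.map_id_id]
  map_comp f g := by
    dsimp
    exact Prod.ext rfl (by rw [H.map_comp, ← prod.map_map]; rfl)

section ProdCoalgebra

variable {C : Type*} [Category C] [HasBinaryProducts C]

attribute [local simp] prod.lift_fst prod.lift_snd prod.lift_fst_assoc prod.lift_snd_assoc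

lemma prod.lift_id_comp_map {A A' B B' : C} {f : B ⟶ A} {f' : B' ⟶ A'} (u : A ⟶ A')
    (v : B ⟶ B') (w : v ≫ f' = f ≫ u) :
    prod.lift f (𝟙 B) ≫ prod.map u v = v ≫ prod.lift f' (𝟙 B') := by
  ext <;> simp [w]

lemma prod.lift_id_comp_map_id_lift_id {A B : C} (f : B ⟶ A) :
    prod.lift f (𝟙 B) ≫ prod.map (𝟙 A) (prod.lift f (𝟙 B)) =
      prod.lift f (𝟙 B) ≫ prod.lift prod.fst (𝟙 (A ⨯ B)) := by
  ext <;> simp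

lemma prod.lift_fst_id_comp_map_id_snd (A B : C) :
    prod.lift prod.fst (𝟙 (A ⨯ B)) ≫ prod.map (𝟙 A) prod.snd = 𝟙 (A ⨯ B) := by
  ext <;> simp

lemma prod.eq_lift_of_comp_snd_eq_id {A B : C} {m : B ⟶ A ⨯ B} (hm : m ≫ prod.snd = 𝟙 B) :
    m = prod.lift (m ≫ prod.fst) (𝟙 B) := by
  ext <;> simp [hm]

lemma prod.comp_comp_fst_of_comp_map {A A' B B' : C} {m : B ⟶ A ⨯ B} {m' : B' ⟶ A' ⨯ B'}
    (u : A ⟶ A') (v : B ⟶ B') (h : m ≫ prod.map u v = v ≫ m') :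
    v ≫ m' ≫ prod.fst = (m ≫ prod.fst) ≫ u := by
  simp [← reassoc_of% h]

end ProdCoalgebra

section ProductCategory

variable {J : Type*} [Category J] {A C D : Type*} [Category A] [Category C] [Category D]

def isLimitOfIsLimitMapConeFstSnd {F : J ⥤ C × D} (c : Cone F)
    (h₁ : IsLimit ((CategoryTheory.Prod.fst C D).mapCone c))
    (h₂ : IsLimit ((CategoryTheory.Prod.snd C D).mapCone c)) : IsLimit c where
  lift s := (h₁.lift ((CategoryTheory.Prod.fst C D).mapCone s),
    h₂.lift ((CategoryTheory.Prod.snd C D).mapCone s))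
  fac _ j := Prod.hom_ext (h₁.fac _ j) (h₂.fac _ j)
  uniq s m w := Prod.hom_ext
    (h₁.uniq ((CategoryTheory.Prod.fst C D).mapCone s) m.1 fun j => congrArg Prod.fst (w j))
    (h₂.uniq ((CategoryTheory.Prod.snd C D).mapCone s) m.2 fun j => congrArg Prod.snd (w j))

def coneWithFst {F : J ⥤ C × D} (c : Cone F) (s : Cone (F ⋙ CategoryTheory.Prod.fst C D)) :
    Cone F where
  pt := (s.pt, c.pt.2)
  π.app j := (s.π.app j, (c.π.app j).2)
  π.naturality _ _ f := Prod.hom_ext (s.π.naturality f) (congrArg Prod.snd (c.π.naturality f) :)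

instance : PreservesLimitsOfSize (CategoryTheory.Prod.fst C D) where
  preservesLimitsOfShape := ⟨⟨fun {c} hc => ⟨{
    lift s := (hc.lift (coneWithFst c s)).1
    fac s j := congrArg Prod.fst (hc.fac (coneWithFst c s) j)
    uniq s m w := congrArg Prod.fst (hc.uniq (coneWithFst c s) (m, 𝟙 c.pt.2)
      fun j => Prod.hom_ext (w j) (Category.id_comp _)) }⟩⟩⟩

instance : PreservesLimitsOfSize (CategoryTheory.Prod.snd C D) :=
  inferInstanceAs
    (PreservesLimitsOfSize (CategoryTheory.Prod.swap C D ⋙ CategoryTheory.Prod.fst D C))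

instance preservesLimit_prod' (K : J ⥤ A) (F : A ⥤ C) (G : A ⥤ D) [PreservesLimit K F]
    [PreservesLimit K G] : PreservesLimit K (F.prod' G) :=
  ⟨fun hc => ⟨isLimitOfIsLimitMapConeFstSnd _ (isLimitOfPreserves F hc) (isLimitOfPreserves G hc)⟩⟩

instance preservesLimitsOfShape_prod' (F : A ⥤ C) (G : A ⥤ D) [PreservesLimitsOfShape J F]
    [PreservesLimitsOfShape J G] : PreservesLimitsOfShape J (F.prod' G) where

instance preservesFiniteLimits_prod' (F : A ⥤ C) (G : A ⥤ D) [PreservesFiniteLimits F]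
    [PreservesFiniteLimits G] : PreservesFiniteLimits (F.prod' G) where
  preservesFiniteLimits _ := inferInstance

end ProductCategory

section ProdBifunctor

variable (C : Type*) [Category C] [HasBinaryProducts C]

noncomputable def prodBifunctor : C × C ⥤ C where
  obj X := X.1 ⨯ X.2
  map f := prod.map f.1 f.2

noncomputable def diagAdjProdBifunctor : Functor.diag C ⊣ prodBifunctor C :=
  Adjunction.mkOfHomEquiv
    { homEquiv _ _ :=
        { toFun f := prod.lift f.1 f.2
          invFun g := (g ≫ prod.fst, g ≫ prod.snd)
          left_inv _ := Prod.hom_ext (prod.lift_fst _ _) (prod.lift_snd _ _)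
          right_inv _ := prod.hom_ext (prod.lift_fst _ _) (prod.lift_snd _ _) }
      homEquiv_naturality_left_symm _ _ :=
        Prod.hom_ext (Category.assoc _ _ _) (Category.assoc _ _ _)
      homEquiv_naturality_right _ _ := (prod.lift_map _ _ _ _).symm }

instance : (prodBifunctor C).IsRightAdjoint := (diagAdjProdBifunctor C).isRightAdjoint

end ProdBifunctor

section MkHEq

variable {A B T : Type*} [Category A] [Category B] [Category T] {L : A ⥤ T} {R : B ⥤ T}

lemma Comma.mk_eq_of_hom_eq {X : Comma L R} {u : L.obj X.left ⟶ R.obj X.right}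
    (hu : u = X.hom) : Comma.mk X.left X.right u = X := by
  subst hu; rfl

lemma CommaMorphism.mk_heq {X Y : Comma L R} (f : X ⟶ Y) {u : L.obj X.left ⟶ R.obj X.right}
    {v : L.obj Y.left ⟶ R.obj Y.right} (hu : u = X.hom) (hv : v = Y.hom)
    {w : L.map f.left ≫ v = u ≫ R.map f.right} :
    HEq (CommaMorphism.mk f.left f.right w :
      Comma.mk X.left X.right u ⟶ Comma.mk Y.left Y.right v) f := by
  subst hu hv; rfl

variable {C : Type*} [Category C] {G : Comonad C}

lemma Comonad.Coalgebra.mk_eq_of_a_eq {V : G.Coalgebra} {a : V.A ⟶ G.obj V.A} (ha : a = V.a)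
    {h₁ : a ≫ G.ε.app V.A = 𝟙 V.A} {h₂ : a ≫ G.δ.app V.A = a ≫ G.map a} :
    Comonad.Coalgebra.mk V.A a h₁ h₂ = V := by
  subst ha; rfl

lemma Comonad.Coalgebra.Hom.mk_heq {V W : G.Coalgebra} (f : V ⟶ W) {a : V.A ⟶ G.obj V.A}
    {b : W.A ⟶ G.obj W.A} (ha : a = V.a) (hb : b = W.a)
    {h₁ : a ≫ G.ε.app V.A = 𝟙 V.A} {h₂ : a ≫ G.δ.app V.A = a ≫ G.map a}
    {h₃ : b ≫ G.ε.app W.A = 𝟙 W.A} {h₄ : b ≫ G.δ.app W.A = b ≫ G.map b}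
    {h : a ≫ G.map f.f = f.f ≫ b} :
    HEq (Comonad.Coalgebra.Hom.mk f.f h :
      Comonad.Coalgebra.mk V.A a h₁ h₂ ⟶ Comonad.Coalgebra.mk W.A b h₃ h₄) f := by
  subst ha hb; rfl

end MkHEq

section Glue

variable [HasBinaryProducts E₂] (H : E₁ ⥤ E₂)

noncomputable def glueComonad : Comonad (E₁ × E₂) where
  toFunctor := glueFunctor H
  ε.app X := (𝟙 X.1, prod.snd)
  ε.naturality _ _ _ := by ext <;> simp [glueFunctor]
  δ.app X := (𝟙 X.1, prod.lift prod.fst (𝟙 (H.obj X.1 ⨯ X.2)))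
  δ.naturality _ _ _ := Prod.hom_ext (by simp [glueFunctor])
    (prod.lift_id_comp_map _ _ (prod.map_fst _ _)).symm
  coassoc X := Prod.hom_ext (by simp [glueFunctor]) (by
    simp only [glueFunctor, prod_comp_snd, H.map_id]
    exact prod.lift_id_comp_map_id_lift_id prod.fst)
  left_counit _ := Prod.hom_ext (by simp [glueFunctor]) (prod.lift_snd _ _)
  right_counit _ := Prod.hom_ext (by simp [glueFunctor]) (by
    simp only [glueFunctor, prod_comp_snd, prod_id_snd, H.map_id]
    exact prod.lift_fst_id_comp_map_id_snd _ _)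

lemma glueFunctor_eq_prod' : glueFunctor H =
    (CategoryTheory.Prod.fst E₁ E₂).prod'
      ((CategoryTheory.Prod.fst E₁ E₂ ⋙ H).prod' (CategoryTheory.Prod.snd E₁ E₂) ⋙
        prodBifunctor E₂) :=
  rfl

lemma preservesFiniteLimits_glueFunctor [PreservesFiniteLimits H] :
    PreservesFiniteLimits (glueFunctor H) := by
  rw [glueFunctor_eq_prod']
  infer_instance

lemma glueComonad_coalgebra_a_eq (V : (glueComonad H).Coalgebra) :
    V.a = (𝟙 V.A.1, prod.lift (V.a.2 ≫ prod.fst) (𝟙 V.A.2)) :=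
  Prod.hom_ext ((Category.comp_id _).symm.trans (congrArg Prod.fst V.counit))
    (prod.eq_lift_of_comp_snd_eq_id (congrArg Prod.snd V.counit))

noncomputable def commaToCoalgebra : Comma (𝟭 E₂) H ⥤ (glueComonad H).Coalgebra where
  obj X :=
    { A := (X.right, X.left)
      a := (𝟙 X.right, prod.lift X.hom (𝟙 X.left))
      counit := Prod.hom_ext (Category.comp_id _) (prod.lift_snd _ _)
      coassoc := Prod.hom_ext (by simp [glueComonad, glueFunctor]) (by
        simp only [glueComonad, glueFunctor, prod_comp_snd, H.map_id]
        exact (prod.lift_id_comp_map_id_lift_id X.hom).symm) }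
  map g :=
    { f := (g.right, g.left)
      h := Prod.hom_ext (by simp [glueComonad, glueFunctor]) (prod.lift_id_comp_map _ _ g.w) }

noncomputable def coalgebraToComma : (glueComonad H).Coalgebra ⥤ Comma (𝟭 E₂) H where
  obj V :=
    { left := V.A.2
      right := V.A.1
      hom := V.a.2 ≫ prod.fst }
  map g :=
    { left := g.f.2
      right := g.f.1
      w := prod.comp_comp_fst_of_comp_map _ _ (congrArg Prod.snd g.h) }

lemma commaToCoalgebra_comp_coalgebraToComma :
    commaToCoalgebra H ⋙ coalgebraToComma H = 𝟭 (Comma (𝟭 E₂) H) :=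
  CategoryTheory.Functor.hext (fun X => Comma.mk_eq_of_hom_eq (prod.lift_fst X.hom (𝟙 X.left)))
    (fun _ _ f => CommaMorphism.mk_heq f (prod.lift_fst _ _) (prod.lift_fst _ _))

lemma coalgebraToComma_comp_commaToCoalgebra :
    coalgebraToComma H ⋙ commaToCoalgebra H = 𝟭 (glueComonad H).Coalgebra :=
  CategoryTheory.Functor.hext
    (fun V => Comonad.Coalgebra.mk_eq_of_a_eq (glueComonad_coalgebra_a_eq H V).symm)
    (fun V W f => Comonad.Coalgebra.Hom.mk_heq f (glueComonad_coalgebra_a_eq H V).symm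
      (glueComonad_coalgebra_a_eq H W).symm)

end Glue

theorem comma_iso_coalgebras_general [HasFiniteLimits E₂]
    (H : E₁ ⥤ E₂) [PreservesFiniteLimits H] :
    ∃ G : Comonad (E₁ × E₂), G.toFunctor = glueFunctor H ∧
      PreservesFiniteLimits G.toFunctor ∧
      ∃ (K : Comma (𝟭 E₂) H ⥤ G.Coalgebra) (K' : G.Coalgebra ⥤ Comma (𝟭 E₂) H),
        K ⋙ K' = 𝟭 (Comma (𝟭 E₂) H) ∧ K' ⋙ K = 𝟭 G.Coalgebra :=
  ⟨glueComonad H, rfl, preservesFiniteLimits_glueFunctor H, commaToCoalgebra H,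
    coalgebraToComma H, commaToCoalgebra_comp_coalgebraToComma H,
    coalgebraToComma_comp_commaToCoalgebra H⟩

/-- for a finite-limit-preserving functor `H : E₁ ⥤ E₂` between categories with
finite limits, the assignment `(X₁, X₂) ↦ (X₁, HX₁ × X₂)` underlies a cartesian comonad `G`
on `E₁ × E₂`, and the comma category `(E₂ ↓ H)` is isomorphic to the category of
`G`-coalgebras. -/
theorem comma_iso_coalgebras [HasFiniteLimits E₁] [HasFiniteLimits E₂]
    (H : E₁ ⥤ E₂) [PreservesFiniteLimits H] :
    ∃ G : Comonad (E₁ × E₂), G.toFunctor = glueFunctor H ∧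
      PreservesFiniteLimits G.toFunctor ∧
      ∃ (K : Comma (𝟭 E₂) H ⥤ G.Coalgebra) (K' : G.Coalgebra ⥤ Comma (𝟭 E₂) H),
        K ⋙ K' = 𝟭 (Comma (𝟭 E₂) H) ∧ K' ⋙ K = 𝟭 G.Coalgebra :=
  comma_iso_coalgebras_general H
end

section
/- Let E be a locally cartesian closed category, P₀, P₁ : E → E endofunctors, and φ, ψ : P₀ ⇒ P₁ and ε : P₁ ⇒ P₀ natural transformations with ε ∘ φ = id and ε ∘ ψ = id. Let ι : P ⇒ P₀ be the equalizer of φ and ψ in the category of endofunctors of E (computed pointwise). Suppose P₀ preserves pullbacks, P₁ preserves monomorphisms, and both P₀ and P₁ have initial algebras. Then P has a well-founded fixed point. -/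
open CategoryTheory CategoryTheory.Limits

universe v u

variable {E : Type u} [Category.{v} E]

/-- A category with finite limits is locally cartesian closed if every pullback functor
`f* : E/J ⥤ E/I` has a right adjoint (pushforward). -/
def IsLCC (E : Type u) [Category.{v} E] [HasFiniteLimits E] : Prop :=
  ∀ ⦃I J : E⦄ (f : I ⟶ J), (Over.pullback f).IsLeftAdjoint

/-- Mono in the category of algebras implies mono on underlying objects. -/
private theorem alg_hom_mono_f [HasFiniteLimits E] {P : E ⥤ E}
    {Y Z : Endofunctor.Algebra P} (m : Y ⟶ Z) (hm : Mono m) : Mono m.f := by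
  have hst : (P.map (pullback.fst m.f m.f) ≫ Y.str) ≫ m.f
           = (P.map (pullback.snd m.f m.f) ≫ Y.str) ≫ m.f := by
    rw [Category.assoc, ← m.h, Category.assoc, ← m.h, ← Category.assoc, ← P.map_comp,
        pullback.condition, P.map_comp, Category.assoc]
  let Kalg : Endofunctor.Algebra P := ⟨pullback m.f m.f, pullback.lift _ _ hst⟩
  let p1 : Kalg ⟶ Y := ⟨pullback.fst m.f m.f, (pullback.lift_fst _ _ hst).symm⟩
  let p2 : Kalg ⟶ Y := ⟨pullback.snd m.f m.f, (pullback.lift_snd _ _ hst).symm⟩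
  have hcmp : p1 ≫ m = p2 ≫ m := by
    apply Endofunctor.Algebra.ext
    simpa using pullback.condition
  have hpq : pullback.fst m.f m.f = pullback.snd m.f m.f :=
    congrArg Endofunctor.Algebra.Hom.f ((cancel_mono m).mp hcmp)
  constructor
  intro Z' x y hxy
  rw [← pullback.lift_fst x y hxy, hpq, pullback.lift_snd]

private theorem aux_section [HasFiniteLimits E]
    {P P₀ P₁ : E ⥤ E} {φ ψ : P₀ ⟶ P₁} (ι : P ⟶ P₀)
    (wapp : ∀ X : E, ι.app X ≫ φ.app X = ι.app X ≫ ψ.app X)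
    (pw : ∀ X : E, IsLimit (Fork.ofι (ι.app X) (wapp X)))
    [P₁.PreservesMonomorphisms] [PreservesLimitsOfShape WalkingCospan P₀]
    {W W₀ : E} (e : W ⟶ W₀) (s₀ : P₀.obj W₀ ⟶ W₀)
    (s : P.obj W ⟶ W)
    (KP : IsPullback s (ι.app W ≫ P₀.map e) e s₀)
    (hrec : ∀ (T : E) (σT : P₀.obj T ⟶ T) (τ : T ⟶ W₀),
      P₀.map τ ≫ s₀ = σT ≫ τ → ∃ v : W₀ ⟶ T, v ≫ τ = 𝟙 W₀)
    (hadj : (Over.pullback e).IsLeftAdjoint)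
    (Ya : E) (t : P.obj Ya ⟶ Ya) (mf : Ya ⟶ W) [Mono mf]
    (hcomm : P.map mf ≫ s = t ≫ mf) :
    ∃ sec : W ⟶ Ya, sec ≫ mf = 𝟙 W := by
  have mιW : Mono (ι.app W) := by
    have := mono_of_isLimit_fork (pw W); simpa using this
  haveI := hadj
  let adj := Adjunction.ofIsLeftAdjoint (Over.pullback e)
  let G := (Over.pullback e).rightAdjoint
  let Xm : Over W := Over.mk mf
  let T : E := (G.obj Xm).left
  let τ : T ⟶ W₀ := (G.obj Xm).hom
  let γ : pullback τ e ⟶ Ya := (adj.counit.app Xm).left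
  have γw : γ ≫ mf = pullback.snd τ e := Over.w (adj.counit.app Xm)
  let π₁ := pullback.fst (P₀.map τ ≫ s₀) e
  let π₂ := pullback.snd (P₀.map τ ≫ s₀) e
  have hκw : π₂ ≫ e = (π₁ ≫ P₀.map τ) ≫ s₀ := by
    rw [Category.assoc, ← pullback.condition]
  obtain ⟨κ, κ₁, κ₂⟩ : ∃ κ : pullback (P₀.map τ ≫ s₀) e ⟶ P.obj W,
      κ ≫ s = π₂ ∧ κ ≫ (ι.app W ≫ P₀.map e) = π₁ ≫ P₀.map τ :=
    ⟨KP.lift π₂ (π₁ ≫ P₀.map τ) hκw, KP.lift_fst _ _ _, KP.lift_snd _ _ _⟩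
  have PBR := (IsPullback.of_hasPullback τ e).map P₀
  obtain ⟨μ, hμm⟩ : ∃ μ : pullback (P₀.map τ ≫ s₀) e ⟶ P₀.obj Ya,
      μ ≫ P₀.map mf = κ ≫ ι.app W := by
    refine ⟨PBR.lift π₁ (κ ≫ ι.app W) (by rw [← κ₂, Category.assoc]) ≫ P₀.map γ, ?_⟩
    rw [Category.assoc, ← P₀.map_comp, γw, PBR.lift_snd]
  have hμ : μ ≫ φ.app Ya = μ ≫ ψ.app Ya := by
    rw [← cancel_mono (P₁.map mf)]
    have key : ∀ α : P₀ ⟶ P₁, (μ ≫ α.app Ya) ≫ P₁.map mf = κ ≫ (ι.app W ≫ α.app W) := by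
      intro α
      rw [Category.assoc, ← α.naturality mf, ← Category.assoc, hμm, Category.assoc]
    rw [key φ, key ψ, wapp W]
  obtain ⟨lam, lamι⟩ := Fork.IsLimit.lift' (pw Ya) μ hμ
  have lamι' : lam ≫ ι.app Ya = μ := by simpa using lamι
  have hlam : lam ≫ P.map mf = κ := by
    rw [← cancel_mono (ι.app W), Category.assoc, ι.naturality mf, ← Category.assoc,
        lamι', hμm]
  have hρ : (lam ≫ t) ≫ mf = π₂ := by
    rw [Category.assoc, ← hcomm, ← Category.assoc, hlam, κ₁]
  let ρhom : (Over.pullback e).obj (Over.mk (P₀.map τ ≫ s₀)) ⟶ Xm := Over.homMk (lam ≫ t) hρ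
  let σhom : Over.mk (P₀.map τ ≫ s₀) ⟶ G.obj Xm := (adj.homEquiv _ Xm) ρhom
  have στ : σhom.left ≫ τ = P₀.map τ ≫ s₀ := Over.w σhom
  obtain ⟨v, vτ⟩ := hrec T σhom.left τ στ.symm
  let βhom : Over.mk (𝟙 W₀) ⟶ G.obj Xm := Over.homMk v vτ
  let ζ := (adj.homEquiv (Over.mk (𝟙 W₀)) Xm).symm βhom
  have ζw : ζ.left ≫ mf = pullback.snd (𝟙 W₀) e := Over.w ζ
  refine ⟨inv (pullback.snd (𝟙 W₀) e) ≫ ζ.left, ?_⟩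
  rw [Category.assoc, ζw, IsIso.inv_hom_id]

/-- let `φ, ψ : P₀ ⇒ P₁` and `ε : P₁ ⇒ P₀` satisfy `ε ∘ φ = id` and
`ε ∘ ψ = id`, and let `ι : P ⇒ P₀` be the equalizer of `φ` and `ψ` in the category of
endofunctors of a locally cartesian closed category `E`. If `P₀` preserves pullbacks, `P₁`
preserves monomorphisms, and `P₀`, `P₁` have initial algebras, then `P` has a well-founded
fixed point: a `P`-algebra `(W, s)` with `s` an isomorphism such that every monomorphism
into it in `Alg(P)` is an isomorphism. -/
theorem equalizer_wellfounded_fixed_point [HasFiniteLimits E] (hlcc : IsLCC E)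
    (P P₀ P₁ : E ⥤ E) (φ ψ : P₀ ⟶ P₁) (ε : P₁ ⟶ P₀)
    (hφ : φ ≫ ε = 𝟙 P₀) (hψ : ψ ≫ ε = 𝟙 P₀)
    (ι : P ⟶ P₀) (w : ι ≫ φ = ι ≫ ψ) (hι : IsLimit (Fork.ofι ι w))
    [PreservesLimitsOfShape WalkingCospan P₀] [P₁.PreservesMonomorphisms]
    (h₀ : HasInitial (Endofunctor.Algebra P₀)) (h₁ : HasInitial (Endofunctor.Algebra P₁)) :
    ∃ W : Endofunctor.Algebra P, IsIso W.str ∧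
      ∀ (Y : Endofunctor.Algebra P) (m : Y ⟶ W), Mono m → IsIso m := by
  haveI := h₀; haveI := h₁
  have hφa : ∀ X : E, φ.app X ≫ ε.app X = 𝟙 (P₀.obj X) := fun X => by
    rw [← NatTrans.comp_app, hφ]; rfl
  have hψa : ∀ X : E, ψ.app X ≫ ε.app X = 𝟙 (P₀.obj X) := fun X => by
    rw [← NatTrans.comp_app, hψ]; rfl
  have wapp : ∀ X : E, ι.app X ≫ φ.app X = ι.app X ≫ ψ.app X := fun X => by
    rw [← NatTrans.comp_app, ← NatTrans.comp_app, w]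
  have pw : ∀ X : E, IsLimit (Fork.ofι (ι.app X) (wapp X)) := fun X =>
    isLimitForkMapOfIsLimit ((evaluation E E).obj X) w hι
  have mι : ∀ X : E, Mono (ι.app X) := fun X => by
    have := mono_of_isLimit_fork (pw X); simpa using this
  -- initial algebras
  let A₀ : Endofunctor.Algebra P₀ := ⊥_ _
  let A₁ : Endofunctor.Algebra P₁ := ⊥_ _
  haveI hs₀ : IsIso A₀.str := Endofunctor.Algebra.Initial.str_isIso initialIsInitial
  haveI hs₁ : IsIso A₁.str := Endofunctor.Algebra.Initial.str_isIso initialIsInitial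
  let Aφ : Endofunctor.Algebra P₀ := ⟨A₁.a, φ.app A₁.a ≫ A₁.str⟩
  let Aψ : Endofunctor.Algebra P₀ := ⟨A₁.a, ψ.app A₁.a ≫ A₁.str⟩
  let Bε : Endofunctor.Algebra P₁ := ⟨A₀.a, ε.app A₀.a ≫ A₀.str⟩
  -- the comparison maps
  obtain ⟨hh, hhh⟩ : ∃ hh : A₀.a ⟶ A₁.a,
      P₀.map hh ≫ (φ.app A₁.a ≫ A₁.str) = A₀.str ≫ hh := ⟨(initial.to Aφ).f, (initial.to Aφ).h⟩
  obtain ⟨kk, hkk⟩ : ∃ kk : A₀.a ⟶ A₁.a,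
      P₀.map kk ≫ (ψ.app A₁.a ≫ A₁.str) = A₀.str ≫ kk := ⟨(initial.to Aψ).f, (initial.to Aψ).h⟩
  -- the common retraction, and split mono property
  have hret : ∃ gg : A₁.a ⟶ A₀.a, hh ≫ gg = 𝟙 A₀.a ∧ kk ≫ gg = 𝟙 A₀.a := by
    obtain ⟨gg, hgg⟩ : ∃ gg : A₁.a ⟶ A₀.a,
        P₁.map gg ≫ (ε.app A₀.a ≫ A₀.str) = A₁.str ≫ gg := ⟨(initial.to Bε).f, (initial.to Bε).h⟩
    have cφ : P₀.map gg ≫ A₀.str = (φ.app A₁.a ≫ A₁.str) ≫ gg := by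
      rw [Category.assoc, ← hgg, ← Category.assoc, ← φ.naturality gg, Category.assoc,
          ← Category.assoc (φ.app A₀.a), hφa, Category.id_comp]
    have cψ : P₀.map gg ≫ A₀.str = (ψ.app A₁.a ≫ A₁.str) ≫ gg := by
      rw [Category.assoc, ← hgg, ← Category.assoc, ← ψ.naturality gg, Category.assoc,
          ← Category.assoc (ψ.app A₀.a), hψa, Category.id_comp]
    refine ⟨gg, ?_, ?_⟩
    · have h1 : (⟨hh, hhh⟩ : A₀ ⟶ Aφ) ≫ (⟨gg, cφ⟩ : Aφ ⟶ A₀) = 𝟙 A₀ := initial.hom_ext _ _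
      have := congrArg Endofunctor.Algebra.Hom.f h1
      simpa using this
    · have h1 : (⟨kk, hkk⟩ : A₀ ⟶ Aψ) ≫ (⟨gg, cψ⟩ : Aψ ⟶ A₀) = 𝟙 A₀ := initial.hom_ext _ _
      have := congrArg Endofunctor.Algebra.Hom.f h1
      simpa using this
  obtain ⟨gg, hg, kg⟩ := hret
  haveI : IsSplitMono hh := IsSplitMono.mk' ⟨gg, hg⟩
  haveI : Mono hh := inferInstance
  -- the equalizer W
  let W : E := equalizer hh kk
  let e : W ⟶ A₀.a := equalizer.ι hh kk
  have ec : e ≫ hh = e ≫ kk := equalizer.condition hh kk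
  -- the equalizer fork is also a pullback, thanks to the common retraction
  have zeq : ∀ z : PullbackCone hh kk, z.fst = z.snd := fun z => by
    calc z.fst = z.fst ≫ 𝟙 _ := by rw [Category.comp_id]
      _ = z.fst ≫ hh ≫ gg := by rw [hg]
      _ = z.snd ≫ kk ≫ gg := by rw [← Category.assoc, z.condition, Category.assoc]
      _ = z.snd := by rw [kg, Category.comp_id]
  have zc : ∀ z : PullbackCone hh kk, z.fst ≫ hh = z.fst ≫ kk := fun z => by
    rw [z.condition, ← zeq z]
  have SqA : IsPullback e e hh kk := by
    refine IsPullback.of_isLimit (PullbackCone.IsLimit.mk ec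
      (fun z => equalizer.lift z.fst (zc z))
      (fun z => equalizer.lift_ι _ _) (fun z => ?_) (fun z mm h1 h2 => ?_))
    · rw [← zeq z]; exact equalizer.lift_ι _ _
    · rw [← cancel_mono e]
      rw [show mm ≫ e = z.fst from h1]
      exact (equalizer.lift_ι _ _).symm
  have SqP := SqA.map P₀
  -- the algebra structure on W
  have cond_s : (ι.app W ≫ P₀.map e ≫ A₀.str) ≫ hh = (ι.app W ≫ P₀.map e ≫ A₀.str) ≫ kk := by
    have cs : ∀ (α : P₀ ⟶ P₁) (q : A₀.a ⟶ A₁.a),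
        P₀.map q ≫ (α.app A₁.a ≫ A₁.str) = A₀.str ≫ q →
        (ι.app W ≫ P₀.map e ≫ A₀.str) ≫ q
          = ι.app W ≫ α.app W ≫ P₁.map (e ≫ q) ≫ A₁.str := by
      intro α q hq
      rw [Category.assoc, Category.assoc, ← hq, ← Category.assoc (P₀.map e), ← P₀.map_comp,
          ← Category.assoc (P₀.map (e ≫ q)), α.naturality (e ≫ q), Category.assoc]
    rw [cs φ hh hhh, cs ψ kk hkk, ← Category.assoc, ← Category.assoc, wapp W, ec]
    simp only [Category.assoc]
  let s : P.obj W ⟶ W := equalizer.lift (ι.app W ≫ P₀.map e ≫ A₀.str) cond_s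
  have se : s ≫ e = ι.app W ≫ P₀.map e ≫ A₀.str := equalizer.lift_ι _ _
  haveI : Mono (P₀.map e) := P₀.map_mono e
  haveI : Mono (ι.app W ≫ P₀.map e) := by haveI := mι W; exact mono_comp _ _
  -- the key pullback square
  have KP : IsPullback s (ι.app W ≫ P₀.map e) e A₀.str := by
    have comm : s ≫ e = (ι.app W ≫ P₀.map e) ≫ A₀.str := by
      rw [se, Category.assoc]
    have hd : ∀ z : PullbackCone e A₀.str,
        z.snd ≫ P₀.map hh ≫ φ.app A₁.a = z.snd ≫ P₀.map kk ≫ ψ.app A₁.a := fun z => by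
      rw [← cancel_mono A₁.str]
      simp only [Category.assoc]
      rw [hhh, hkk, ← Category.assoc, ← Category.assoc, ← z.condition,
          Category.assoc, Category.assoc, ec]
    have hd2 : ∀ z : PullbackCone e A₀.str,
        z.snd ≫ P₀.map hh = z.snd ≫ P₀.map kk := fun z => by
      have h4 : (z.snd ≫ P₀.map hh ≫ φ.app A₁.a) ≫ ε.app A₁.a
          = (z.snd ≫ P₀.map kk ≫ ψ.app A₁.a) ≫ ε.app A₁.a := by rw [hd z]
      simp only [Category.assoc] at h4
      rw [hφa, hψa] at h4
      simpa using h4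
    have liftc : ∀ z : PullbackCone e A₀.str,
        {c : z.pt ⟶ P₀.obj W // c ≫ P₀.map e = z.snd} := fun z =>
      ⟨SqP.lift z.snd z.snd (hd2 z), SqP.lift_fst _ _ _⟩
    haveI : Mono (e ≫ hh) := mono_comp _ _
    haveI : Mono (P₁.map (e ≫ hh)) := P₁.map_mono _
    have n1 : ∀ (z : PullbackCone e A₀.str) (α : P₀ ⟶ P₁) (q : A₀.a ⟶ A₁.a),
        ((liftc z).1 ≫ α.app W) ≫ P₁.map (e ≫ q) = z.snd ≫ P₀.map q ≫ α.app A₁.a := by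
      intro z α q
      rw [Category.assoc, ← α.naturality (e ≫ q), P₀.map_comp, Category.assoc,
          reassoc_of% (liftc z).2]
    have hc : ∀ z : PullbackCone e A₀.str,
        (liftc z).1 ≫ φ.app W = (liftc z).1 ≫ ψ.app W := fun z => by
      rw [← cancel_mono (P₁.map (e ≫ hh))]
      calc ((liftc z).1 ≫ φ.app W) ≫ P₁.map (e ≫ hh)
          = z.snd ≫ P₀.map hh ≫ φ.app A₁.a := n1 z φ hh
        _ = z.snd ≫ P₀.map kk ≫ ψ.app A₁.a := hd z
        _ = ((liftc z).1 ≫ ψ.app W) ≫ P₁.map (e ≫ kk) := (n1 z ψ kk).symm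
        _ = ((liftc z).1 ≫ ψ.app W) ≫ P₁.map (e ≫ hh) := by rw [← ec]
    have liftl : ∀ z : PullbackCone e A₀.str,
        {l : z.pt ⟶ P.obj W // l ≫ ι.app W = (liftc z).1} := fun z =>
      ⟨(Fork.IsLimit.lift' (pw W) (liftc z).1 (hc z)).1,
        (Fork.IsLimit.lift' (pw W) (liftc z).1 (hc z)).2⟩
    refine IsPullback.of_isLimit (PullbackCone.IsLimit.mk comm
      (fun z => (liftl z).1) (fun z => ?_) (fun z => ?_) (fun z mm h1 h2 => ?_))
    · rw [← cancel_mono e, Category.assoc, se, reassoc_of% (liftl z).2,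
          reassoc_of% (liftc z).2, z.condition]
    · rw [reassoc_of% (liftl z).2, (liftc z).2]
    · rw [← cancel_mono (ι.app W ≫ P₀.map e), h2, reassoc_of% (liftl z).2, (liftc z).2]
  -- the recursion principle from initiality
  have hrec : ∀ (T : E) (σT : P₀.obj T ⟶ T) (τ : T ⟶ A₀.a),
      P₀.map τ ≫ A₀.str = σT ≫ τ → ∃ v : A₀.a ⟶ T, v ≫ τ = 𝟙 A₀.a := by
    intro T σT τ hτ
    have h1 : initial.to (⟨T, σT⟩ : Endofunctor.Algebra P₀) ≫
        (⟨τ, hτ⟩ : (⟨T, σT⟩ : Endofunctor.Algebra P₀) ⟶ A₀) = 𝟙 A₀ := initial.hom_ext _ _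
    refine ⟨(initial.to (⟨T, σT⟩ : Endofunctor.Algebra P₀)).f, ?_⟩
    have h2 := congrArg Endofunctor.Algebra.Hom.f h1
    simp only [Endofunctor.Algebra.comp_f, Endofunctor.Algebra.id_f] at h2
    exact h2
  -- well-foundedness of the algebra (W, s)
  have WF : ∀ (Y : Endofunctor.Algebra P) (m : Y ⟶ (⟨W, s⟩ : Endofunctor.Algebra P)),
      Mono m → IsIso m := by
    intro Y m hm
    haveI : Mono m.f := alg_hom_mono_f m hm
    obtain ⟨sec, hsec⟩ := aux_section ι wapp pw e A₀.str s KP hrec (hlcc e) Y.a Y.str m.f m.h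
    haveI : IsSplitEpi m.f := IsSplitEpi.mk' ⟨sec, hsec⟩
    haveI : IsIso m.f := isIso_of_mono_of_isSplitEpi m.f
    exact Endofunctor.Algebra.iso_of_iso m
  refine ⟨⟨W, s⟩, ?_, WF⟩
  -- the structure map is an isomorphism, since it is itself a mono into (W, s)
  haveI : Mono s := by
    haveI : Mono (s ≫ e) := by rw [se]; exact mono_comp _ _
    exact mono_of_mono s e
  have hs : IsIso ((⟨s, rfl⟩ : (⟨P.obj W, P.map s⟩ : Endofunctor.Algebra P) ⟶ ⟨W, s⟩)) :=
    WF _ _ (Endofunctor.Algebra.mono_of_mono _)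
  haveI := hs
  exact inferInstanceAs (IsIso ((Endofunctor.Algebra.forget P).map
    (⟨s, rfl⟩ : (⟨P.obj W, P.map s⟩ : Endofunctor.Algebra P) ⟶ ⟨W, s⟩)))
end

section
/- Let G be a cartesian comonad on a category E with finite limits. If E is locally cartesian closed, then the category E_G of G-coalgebras is locally cartesian closed. -/
open CategoryTheory CategoryTheory.Limits

universe w w' v u

variable {E : Type u} [Category.{v} E]

instance coalgebraHasColimitsOfShape (G : Comonad E) {J : Type w} [Category.{w'} J]
    [HasColimitsOfShape J E] : HasColimitsOfShape J G.Coalgebra :=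
  ⟨fun D => Comonad.hasColimit_of_comp_forget_hasColimit D⟩

instance coalgebraHasLimitsOfShape (G : Comonad E) {J : Type w} [Category.{w'} J]
    [HasLimitsOfShape J E] [PreservesLimitsOfShape J G.toFunctor] :
    HasLimitsOfShape J G.Coalgebra :=
  ⟨fun D => Comonad.forget_creates_limits_of_comonad_preserves D⟩

instance coalgebraHasFiniteLimits (G : Comonad E) [HasFiniteLimits E]
    [PreservesFiniteLimits G.toFunctor] : HasFiniteLimits G.Coalgebra :=
  ⟨fun _ _ _ => inferInstance⟩

/-! The forgetful functor `U : E_G ⥤ E` is comonadic and, `G` being cartesian, creates finite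
limits. Hence each slice functor `U/I : E_G/I ⥤ E/UI` is again a left adjoint which reflects
isomorphisms and preserves equalizers, so it is comonadic by Beck's theorem. Since `U` preserves
pullbacks, `U/I ∘ f* ≅ (Uf)* ∘ U/J`, and `(Uf)*` has a right adjoint because `E` is locally
cartesian closed; the adjoint lifting theorem then produces a right adjoint of `f*`. -/

namespace CategoryTheory

universe v₁ v₂ u₁ u₂

section

variable {C : Type u₁} {D : Type u₂} [Category.{v₁} C] [Category.{v₂} D]

instance Over.reflectsIsomorphisms_post (F : C ⥤ D) [F.ReflectsIsomorphisms] (X : C) :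
    (Over.post F (X := X)).ReflectsIsomorphisms :=
  have : (Over.post F (X := X) ⋙ Over.forget (F.obj X)).ReflectsIsomorphisms :=
    inferInstanceAs (Over.forget X ⋙ F).ReflectsIsomorphisms
  reflectsIsomorphisms_of_comp _ (Over.forget (F.obj X))

noncomputable def Over.pullbackPostIso [HasPullbacks C] [HasPullbacks D] (F : C ⥤ D)
    [PreservesLimitsOfShape WalkingCospan F] {X Y : C} (f : X ⟶ Y) :
    Over.pullback f ⋙ Over.post F ≅ Over.post F ⋙ Over.pullback (F.map f) :=
  NatIso.ofComponents
    (fun b => Over.isoMk (PreservesPullback.iso F b.hom f) (by simp [Over.post, Over.pullback]))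
    (fun φ => by
      ext
      change F.map (pullback.lift _ _ _) ≫ (PreservesPullback.iso F _ f).hom =
        (PreservesPullback.iso F _ f).hom ≫ pullback.lift _ _ _
      apply pullback.hom_ext <;>
        simp only [Category.assoc, pullback.lift_fst, pullback.lift_snd, ← F.map_comp,
          PreservesPullback.iso_hom_fst, PreservesPullback.iso_hom_snd]
      · erw [pullback.lift_fst, PreservesPullback.iso_hom_fst_assoc]; simp
      · erw [pullback.lift_snd, PreservesPullback.iso_hom_snd])

end

noncomputable instance Over.comonadicLeftAdjointPost {C : Type u₁} {D : Type u₂}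
    [Category.{v₁} C] [Category.{v₁} D] [HasFiniteLimits C] (F : C ⥤ D) [F.IsLeftAdjoint]
    [F.ReflectsIsomorphisms] [PreservesFiniteLimits F] (X : C) :
    ComonadicLeftAdjoint (Over.post F (X := X)) :=
  have : Comonad.PreservesLimitOfIsCoreflexivePair (Over.post F (X := X)) := ⟨inferInstance⟩
  Comonad.comonadicOfHasPreservesCoreflexiveEqualizersOfReflectsIsomorphisms
    (Over.postAdjunctionLeft (Adjunction.ofIsLeftAdjoint F))

instance Comonad.preservesFiniteLimits_forget {C : Type u₁} [Category.{v₁} C] [HasFiniteLimits C]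
    (G : Comonad C) [PreservesFiniteLimits G.toFunctor] : PreservesFiniteLimits G.forget :=
  ⟨fun _ _ _ => preservesLimitOfShape_of_createsLimitsOfShape_and_hasLimitsOfShape _⟩

end CategoryTheory

/-- for a cartesian comonad `G` on a locally cartesian closed category `E`,
the category `E_G` of `G`-coalgebras is locally cartesian closed. -/
theorem coalgebras_locally_cartesian_closed [HasFiniteLimits E] (G : Comonad E)
    [PreservesFiniteLimits G.toFunctor] (hlcc : IsLCC E) :
    IsLCC G.Coalgebra := by
  intro I J f
  have := hlcc (G.forget.map f)
  exact isLeftAdjoint_square_lift_comonadic (Over.pullback f) (Over.post G.forget)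
    (Over.post G.forget) (Over.pullback (G.forget.map f)) (Over.pullbackPostIso G.forget f).symm
end

section
/- Let G be a cartesian comonad on a locally cartesian closed category E. If E is extensive, then the category E_G of G-coalgebras is extensive. -/
/-!
Extensivity in the sense of slices (`IsExtensive`) and in the sense of van Kampen binary
coproducts (`FinitaryExtensive`) both amount to `PullbackStableCoprod A B` for all `A`, `B`:
coproducts of maps into `A` and `B` are pulled back from the summand inclusions, and pulling back
along the inclusions splits every object over `A ⨿ B` as a coproduct. Van Kampen coproducts lift
along the forgetful functor `E_G ⥤ E`: it preserves pullbacks because `G` is cartesian, preserves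
coproducts as a left adjoint, and reflects isomorphisms.
-/

open CategoryTheory CategoryTheory.Limits

universe w w' v u

variable {E : Type u} [Category.{v} E]

/-- The coproduct functor `E/A × E/B ⥤ E/(A + B)`. -/
@[simps]
noncomputable def coprodOverFunctor [HasBinaryCoproducts E] (A B : E) :
    Over A × Over B ⥤ Over (A ⨿ B) where
  obj X := Over.mk (coprod.map X.1.hom X.2.hom)
  map {X Y} f := Over.homMk (coprod.map f.1.left f.2.left)
    (by dsimp; rw [coprod.map_map, Over.w, Over.w])
  map_id X := by ext; dsimp; ext <;> simp
  map_comp f g := by ext; dsimp; ext <;> simp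

/-- A category with binary coproducts is extensive if each coproduct functor
`E/A × E/B ⥤ E/(A + B)` is an equivalence of categories. -/
def IsExtensive (E : Type u) [Category.{v} E] [HasBinaryCoproducts E] : Prop :=
  ∀ A B : E, (coprodOverFunctor A B).IsEquivalence

section

variable {C : Type u} [Category.{v} C] [HasBinaryCoproducts C]

structure PullbackStableCoprod [HasPullbacksOfInclusions C] (A B : C) : Prop where
  isPullback_inl {X Y : C} (f : X ⟶ A) (g : Y ⟶ B) :
    IsPullback coprod.inl f (coprod.map f g) coprod.inl
  isPullback_inr {X Y : C} (f : X ⟶ A) (g : Y ⟶ B) :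
    IsPullback coprod.inr g (coprod.map f g) coprod.inr
  isColimit_pullback_fst {Z : C} (h : Z ⟶ A ⨿ B) :
    Nonempty (IsColimit (BinaryCofan.mk (pullback.fst h coprod.inl) (pullback.fst h coprod.inr)))

variable {A B : C}

theorem isPullback_inl_coprodMap_of_full_of_faithful [HasInitial C]
    [(coprodOverFunctor A B).Full] [(coprodOverFunctor A B).Faithful] {X Y : C}
    (f : X ⟶ A) (g : Y ⟶ B) :
    IsPullback coprod.inl f (coprod.map f g) coprod.inl := by
  let F := coprodOverFunctor A B
  -- a cone over the cospan is a morphism `F (s.snd, 0 ⟶ B) ⟶ F (f, g)`; its preimage is the lift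
  let m (s : PullbackCone (coprod.map f g) coprod.inl) :
      F.obj (Over.mk s.snd, Over.mk (initial.to B)) ⟶ F.obj (Over.mk f, Over.mk g) :=
    Over.homMk (coprod.desc s.fst (initial.to _)) (by
      change coprod.desc s.fst (initial.to (X ⨿ Y)) ≫ coprod.map f g = coprod.map s.snd _
      apply coprod.hom_ext
      · simpa [coprod.inl_desc] using s.condition
      · exact initial.hom_ext _ _)
  refine .of_isLimit (PullbackCone.IsLimit.mk (by simp) (fun s => (F.preimage (m s)).1.left)
    (fun s => ?_) (fun s => Over.w (F.preimage (m s)).1) (fun s l hl hf => ?_))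
  · have h : coprod.map (F.preimage (m s)).1.left (F.preimage (m s)).2.left =
        (coprod.desc s.fst (initial.to _) : s.pt ⨿ ⊥_ C ⟶ X ⨿ Y) :=
      congrArg CommaMorphism.left (F.map_preimage (m s))
    simpa [coprod.inl_desc] using coprod.inl ≫= h
  · let k : (Over.mk s.snd, Over.mk (initial.to B)) ⟶ (Over.mk f, Over.mk g) :=
      (Over.homMk l hf, Over.homMk (initial.to Y) (initial.hom_ext _ _))
    have : F.map k = m s := by
      ext : 1
      change coprod.map l (initial.to Y) = coprod.desc s.fst (initial.to (X ⨿ Y))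
      apply coprod.hom_ext
      · simpa [coprod.inl_desc] using hl
      · exact initial.hom_ext _ _
    exact congrArg (·.1.left) (F.map_injective (this.trans (F.map_preimage (m s)).symm))

theorem isPullback_inr_coprodMap_of_full_of_faithful [HasInitial C]
    [(coprodOverFunctor B A).Full] [(coprodOverFunctor B A).Faithful] {X Y : C}
    (f : X ⟶ A) (g : Y ⟶ B) :
    IsPullback coprod.inr g (coprod.map f g) coprod.inr :=
  (isPullback_inl_coprodMap_of_full_of_faithful g f).of_iso (Iso.refl _) (coprod.braiding Y X)
    (Iso.refl _) (coprod.braiding B A) (by simp [coprod.inl_desc]) (by simp) (by simp)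
    (by simp [coprod.inl_desc])

theorem isColimit_pullback_fst_of_essSurj [HasPullbacksOfInclusions C]
    [(coprodOverFunctor A B).EssSurj]
    (hl : ∀ {X Y : C} (f : X ⟶ A) (g : Y ⟶ B),
      IsPullback coprod.inl f (coprod.map f g) coprod.inl)
    (hr : ∀ {X Y : C} (f : X ⟶ A) (g : Y ⟶ B),
      IsPullback coprod.inr g (coprod.map f g) coprod.inr)
    {Z : C} (h : Z ⟶ A ⨿ B) :
    Nonempty (IsColimit
      (BinaryCofan.mk (pullback.fst h coprod.inl) (pullback.fst h coprod.inr))) := by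
  -- `h` is a coproduct of maps up to isomorphism, and the summands are its pullbacks
  let p := (coprodOverFunctor A B).objPreimage (Over.mk h)
  let i : p.1.left ⨿ p.2.left ≅ Z :=
    (Over.forget _).mapIso ((coprodOverFunctor A B).objObjPreimageIso (Over.mk h))
  have hi : IsPullback i.hom (coprod.map p.1.hom p.2.hom) h (𝟙 _) :=
    .of_horiz_isIso ⟨by rw [Category.comp_id]; exact Over.w _⟩
  have hl' : IsPullback (coprod.inl ≫ i.hom) p.1.hom h coprod.inl := by
    simpa using (hl p.1.hom p.2.hom).paste_horiz hi
  have hr' : IsPullback (coprod.inr ≫ i.hom) p.2.hom h coprod.inr := by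
    simpa using (hr p.1.hom p.2.hom).paste_horiz hi
  have hc : IsColimit (BinaryCofan.mk (coprod.inl ≫ i.hom) (coprod.inr ≫ i.hom)) :=
    (coprodIsCoprod _ _).ofIsoColimit (BinaryCofan.ext i rfl rfl)
  let e₁ := (IsPullback.of_hasPullback h coprod.inl).isoIsPullback _ _ hl'
  let e₂ := (IsPullback.of_hasPullback h coprod.inr).isoIsPullback _ _ hr'
  rw [← (IsPullback.of_hasPullback h coprod.inl).isoIsPullback_hom_fst _ _ hl',
    ← (IsPullback.of_hasPullback h coprod.inr).isoIsPullback_hom_fst _ _ hr']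
  exact ⟨BinaryCofan.isColimitCompRightIso _ e₂.hom
    (BinaryCofan.isColimitCompLeftIso _ e₁.hom hc)⟩

namespace PullbackStableCoprod

variable [HasPullbacksOfInclusions C]

theorem of_isEquivalence [HasInitial C] [(coprodOverFunctor A B).IsEquivalence]
    [(coprodOverFunctor B A).IsEquivalence] : PullbackStableCoprod A B where
  isPullback_inl := isPullback_inl_coprodMap_of_full_of_faithful
  isPullback_inr := isPullback_inr_coprodMap_of_full_of_faithful
  isColimit_pullback_fst :=
    isColimit_pullback_fst_of_essSurj isPullback_inl_coprodMap_of_full_of_faithful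
      isPullback_inr_coprodMap_of_full_of_faithful

theorem of_isVanKampenColimit
    (hc : IsVanKampenColimit (BinaryCofan.mk (coprod.inl : A ⟶ A ⨿ B) coprod.inr)) :
    PullbackStableCoprod A B := by
  have hpb := fun {X Y : C} => (BinaryCofan.isVanKampen_iff _).mp hc (X' := X) (Y' := Y)
  have hmap {X Y : C} (f : X ⟶ A) (g : Y ⟶ B) :=
    (hpb (BinaryCofan.mk coprod.inl coprod.inr) f g (coprod.map f g)
      (coprod.inl_map f g).symm (coprod.inr_map f g).symm).mp
      ⟨coprodIsCoprod X Y⟩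
  refine ⟨fun f g => (hmap f g).1, fun f g => (hmap f g).2, fun f => ?_⟩
  exact (hpb (BinaryCofan.mk _ _) _ _ f (pullback.condition (f := f) (g := coprod.inl)).symm
    (pullback.condition (f := f) (g := coprod.inr)).symm).mpr
    ⟨.of_hasPullback f coprod.inl, .of_hasPullback f coprod.inr⟩

theorem faithful (h : PullbackStableCoprod A B) : (coprodOverFunctor A B).Faithful where
  map_injective {p q} k k' hk := by
    have hk : coprod.map k.1.left k.2.left = coprod.map k'.1.left k'.2.left :=
      congrArg CommaMorphism.left hk
    ext : 2
    · exact (h.isPullback_inl q.1.hom q.2.hom).hom_ext (by simpa using coprod.inl ≫= hk) (by simp)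
    · exact (h.isPullback_inr q.1.hom q.2.hom).hom_ext (by simpa using coprod.inr ≫= hk) (by simp)

theorem full (h : PullbackStableCoprod A B) : (coprodOverFunctor A B).Full where
  map_surjective {p q} m := by
    let m' : p.1.left ⨿ p.2.left ⟶ q.1.left ⨿ q.2.left := m.left
    have hm : m' ≫ coprod.map q.1.hom q.2.hom = coprod.map p.1.hom p.2.hom := Over.w m
    have hl := h.isPullback_inl q.1.hom q.2.hom
    have hr := h.isPullback_inr q.1.hom q.2.hom
    refine ⟨(Over.homMk (hl.lift (coprod.inl ≫ m') p.1.hom (by simp [hm])) (hl.lift_snd _ _ _),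
      Over.homMk (hr.lift (coprod.inr ≫ m') p.2.hom (by simp [hm])) (hr.lift_snd _ _ _)), ?_⟩
    ext : 1
    change coprod.map (hl.lift _ _ _) (hr.lift _ _ _) = m'
    apply coprod.hom_ext
    · simp
    · simp

theorem essSurj (h : PullbackStableCoprod A B) : (coprodOverFunctor A B).EssSurj where
  mem_essImage z := by
    let i : pullback z.hom coprod.inl ⨿ pullback z.hom coprod.inr ≅ z.left :=
      (coprodIsCoprod _ _).coconePointUniqueUpToIso (h.isColimit_pullback_fst z.hom).some
    have hl : coprod.inl ≫ i.hom = pullback.fst _ _ :=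
      (coprodIsCoprod _ _).comp_coconePointUniqueUpToIso_hom _ ⟨.left⟩
    have hr : coprod.inr ≫ i.hom = pullback.fst _ _ :=
      (coprodIsCoprod _ _).comp_coconePointUniqueUpToIso_hom _ ⟨.right⟩
    have hi : i.hom ≫ z.hom = coprod.map (pullback.snd _ _) (pullback.snd _ _) := by
      apply coprod.hom_ext
      · simp [reassoc_of% hl, pullback.condition]
      · simp [reassoc_of% hr, pullback.condition]
    exact ⟨(Over.mk (pullback.snd _ _), Over.mk (pullback.snd _ _)), ⟨Over.isoMk i hi⟩⟩

theorem isEquivalence (h : PullbackStableCoprod A B) : (coprodOverFunctor A B).IsEquivalence where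
  faithful := h.faithful
  full := h.full
  essSurj := h.essSurj

theorem isVanKampenColimit [HasPullbacks C] (h : PullbackStableCoprod A B) :
    IsVanKampenColimit (BinaryCofan.mk (coprod.inl : A ⟶ A ⨿ B) coprod.inr) := by
  refine BinaryCofan.isVanKampen_mk _
    (fun X Y => BinaryCofan.mk (coprod.inl : X ⟶ X ⨿ Y) coprod.inr) (fun X Y => coprodIsCoprod X Y)
    (pullback.cone · ·) (pullback.isLimit · ·) (fun αX αY f hX hY => ?_)
    (fun f => (h.isColimit_pullback_fst f).some)
  obtain rfl : f = coprod.map αX αY := coprod.hom_ext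
    (hX.symm.trans (coprod.inl_map αX αY).symm) (hY.symm.trans (coprod.inr_map αX αY).symm)
  exact ⟨h.isPullback_inl αX αY, h.isPullback_inr αX αY⟩

end PullbackStableCoprod

end

theorem IsExtensive.finitaryExtensive {C : Type u} [Category.{v} C] [HasFiniteCoproducts C]
    [HasPullbacks C] (hC : IsExtensive C) : FinitaryExtensive C where
  van_kampen' {A B} c hc := by
    have := hC A B
    have := hC B A
    exact PullbackStableCoprod.of_isEquivalence.isVanKampenColimit.of_iso
      (hc.uniqueUpToIso (coprodIsCoprod A B)).symm

theorem FinitaryExtensive.isExtensive {C : Type u} [Category.{v} C] [FinitaryExtensive C] :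
    IsExtensive C := fun A B =>
  (PullbackStableCoprod.of_isVanKampenColimit
    (FinitaryExtensive.van_kampen' _ (coprodIsCoprod A B))).isEquivalence

instance coalgebraFinitaryExtensive (G : Comonad E) [HasFiniteCoproducts E] [HasPullbacks E]
    [FinitaryExtensive E] [PreservesLimitsOfShape WalkingCospan G.toFunctor] : FinitaryExtensive G.Coalgebra :=
  have : HasFiniteCoproducts G.Coalgebra := ⟨fun _ => inferInstance⟩
  have : PreservesColimitsOfShape (Discrete WalkingPair) G.forget :=
    G.adj.leftAdjoint_preservesColimits.preservesColimitsOfShape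
  finitaryExtensive_of_preserves_and_reflects_isomorphism G.forget

theorem coalgebras_extensive_general [HasFiniteLimits E] [HasFiniteCoproducts E]
    (hext : IsExtensive E) (G : Comonad E) [PreservesFiniteLimits G.toFunctor] :
    IsExtensive G.Coalgebra :=
  have := hext.finitaryExtensive
  FinitaryExtensive.isExtensive

/-- for a cartesian comonad `G` on an extensive locally cartesian closed
category `E`, the category `E_G` of `G`-coalgebras is extensive. -/
theorem coalgebras_extensive [HasFiniteLimits E] [HasFiniteCoproducts E] (hlcc : IsLCC E)
    (hext : IsExtensive E) (G : Comonad E) [PreservesFiniteLimits G.toFunctor] :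
    IsExtensive G.Coalgebra :=
  coalgebras_extensive_general hext G
end

section
/- Let E be an extensive locally cartesian closed category. If E has W-types, then E has a natural number object. -/
open CategoryTheory CategoryTheory.Limits

universe v u

variable {E : Type u} [Category.{v} E]

/-- `E` has W-types if every polynomial endofunctor `f_! ∘ g_* ∘ h* : E/I ⥤ E/I` has an
initial algebra. -/
def HasWTypes (E : Type u) [Category.{v} E] [HasFiniteLimits E] : Prop :=
  ∀ ⦃I A B : E⦄ (h : A ⟶ I) (g : A ⟶ B) (f : B ⟶ I) (gStar : Over A ⥤ Over B),
    Nonempty (Over.pullback g ⊣ gStar) →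
      HasInitial (Endofunctor.Algebra (Over.pullback h ⋙ gStar ⋙ Over.map f))

/-!
Up to the equivalence `E/1 ≌ E`, the functor `X ↦ 1 ⨿ X` is the polynomial functor of
`1 ← 1 –inr→ 1 ⨿ 1 → 1`, so its initial algebra is a W-type. The pushforward along `inr` is
computed by extensivity: under `E/(A ⨿ B) ≌ E/A × E/B` the functor `Σ_inr` becomes `Y ↦ (0, Y)`,
so `inr*`, its right adjoint, becomes the second projection, whose right adjoint is `Y ↦ (1, Y)`.
-/

namespace CategoryTheory.Endofunctor.Algebra

variable {C : Type*} {D : Type*} [Category C] [Category D] (e : C ≌ D) (F : C ⥤ C)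

lemma equivConj_functor_map_comm {A B : Algebra F} (f : A ⟶ B) :
    (e.inverse ⋙ F ⋙ e.functor).map (e.functor.map f.f) ≫
        e.functor.map (F.map (e.unitInv.app B.a) ≫ B.str) =
      e.functor.map (F.map (e.unitInv.app A.a) ≫ A.str) ≫ e.functor.map f.f := by
  have n : e.inverse.map (e.functor.map f.f) ≫ e.unitInv.app B.a = e.unitInv.app A.a ≫ f.f :=
    e.unitInv.naturality f.f
  simp only [Functor.comp_map, ← Functor.map_comp]
  rw [← Functor.map_comp_assoc, n, Functor.map_comp_assoc, f.h, Category.assoc]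

lemma equivConj_inverse_map_comm {X Y : Algebra (e.inverse ⋙ F ⋙ e.functor)} (g : X ⟶ Y) :
    F.map (e.inverse.map g.f) ≫ e.unit.app _ ≫ e.inverse.map Y.str =
      (e.unit.app _ ≫ e.inverse.map X.str) ≫ e.inverse.map g.f := by
  have h := congrArg e.inverse.map g.h
  simp only [Functor.comp_map, Functor.map_comp] at h
  rw [Category.assoc, ← h]
  exact e.unit.naturality_assoc _ _

lemma equivConj_unit_comm (A : Algebra F) :
    F.map (e.unit.app A.a) ≫ e.unit.app _ ≫
        e.inverse.map (e.functor.map (F.map (e.unitInv.app A.a) ≫ A.str)) =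
      A.str ≫ e.unit.app A.a := by
  simp [← Functor.map_comp_assoc]

lemma equivConj_counit_comm (Y : Algebra (e.inverse ⋙ F ⋙ e.functor)) :
    (e.inverse ⋙ F ⋙ e.functor).map (e.counit.app Y.a) ≫ Y.str =
      e.functor.map (F.map (e.unitInv.app (e.inverse.obj Y.a)) ≫
        e.unit.app _ ≫ e.inverse.map Y.str) ≫ e.counit.app Y.a := by
  simp [← Equivalence.unitInv_app_inverse]

noncomputable def equivConj : Algebra F ≌ Algebra (e.inverse ⋙ F ⋙ e.functor) :=
  .mk
    { obj A := ⟨e.functor.obj A.a, e.functor.map (F.map (e.unitInv.app A.a) ≫ A.str)⟩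
      map f := ⟨e.functor.map f.f, equivConj_functor_map_comm e F f⟩ }
    { obj Y := ⟨e.inverse.obj Y.a, e.unit.app _ ≫ e.inverse.map Y.str⟩
      map g := ⟨e.inverse.map g.f, equivConj_inverse_map_comm e F g⟩ }
    (NatIso.ofComponents fun A => Algebra.isoMk (e.unitIso.app A.a) (equivConj_unit_comm e F A))
    (NatIso.ofComponents fun Y => Algebra.isoMk (e.counitIso.app Y.a) (equivConj_counit_comm e F Y))

end CategoryTheory.Endofunctor.Algebra

namespace CategoryTheory.Limits

variable {C : Type*} {D : Type*} [Category C] [Category D]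

def IsTerminal.prodSndAdj {t : C} (ht : IsTerminal t) :
    Prod.snd C D ⊣ ((Functor.const D).obj t).prod' (𝟭 D) :=
  Adjunction.mkOfHomEquiv
    { homEquiv X _ :=
        { toFun g := (ht.from X.1, g)
          invFun f := f.2
          left_inv _ := rfl
          right_inv _ := Prod.ext (ht.hom_ext _ _) rfl }
      homEquiv_naturality_left_symm _ _ := rfl
      homEquiv_naturality_right _ _ := Prod.ext (ht.hom_ext _ _) rfl }

def IsInitial.adjProdSnd {i : C} (hi : IsInitial i) :
    ((Functor.const D).obj i).prod' (𝟭 D) ⊣ Prod.snd C D :=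
  Adjunction.mkOfHomEquiv
    { homEquiv _ X :=
        { toFun f := f.2
          invFun g := (hi.to X.1, g)
          left_inv _ := Prod.ext (hi.hom_ext _ _) rfl
          right_inv _ := rfl }
      homEquiv_naturality_left_symm _ _ := Prod.ext (hi.hom_ext _ _) rfl
      homEquiv_naturality_right _ _ := rfl }

end CategoryTheory.Limits

noncomputable def CategoryTheory.Over.isInitialMkInitialTo [HasInitial E] (A : E) :
    IsInitial (Over.mk (initial.to A)) :=
  IsInitial.ofUniqueHom (fun _ => Over.homMk (initial.to _)) fun _ _ => by
    ext
    exact initial.hom_ext _ _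

section Extensive

variable [HasBinaryCoproducts E]

noncomputable def inrPushforward (A B : E) : Over B ⥤ Over (A ⨿ B) :=
  ((Functor.const (Over B)).obj (Over.mk (𝟙 A))).prod' (𝟭 _) ⋙ coprodOverFunctor A B

noncomputable def coprodOverFunctorInitialIso [HasInitial E] (A B : E) :
    ((Functor.const (Over B)).obj (Over.mk (initial.to A))).prod' (𝟭 _) ⋙ coprodOverFunctor A B ≅
      Over.map coprod.inr :=
  NatIso.ofComponents (fun Y => Over.isoMk (coprod.leftUnitor Y.left)
    (coprod.hom_ext (initial.hom_ext _ _) (by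
      change coprod.inr ≫ (coprod.leftUnitor Y.left).hom ≫ Y.hom ≫ coprod.inr =
        coprod.inr ≫ coprod.map (initial.to A) Y.hom
      rw [coprod.leftUnitor_hom, coprod.inr_desc_assoc, Category.id_comp, coprod.inr_map])))
    fun f => by ext; exact coprod.leftUnitor_naturality f.left

noncomputable def pullbackInrPushforwardAdj [HasInitial E] [HasPullbacks E] (A B : E)
    [(coprodOverFunctor A B).IsEquivalence] :
    Over.pullback (coprod.inr : B ⟶ A ⨿ B) ⊣ inrPushforward A B :=
  let e := (coprodOverFunctor A B).asEquivalence
  let mapInrAdj : Over.map coprod.inr ⊣ e.inverse ⋙ CategoryTheory.Prod.snd _ _ :=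
    (((Over.isInitialMkInitialTo A).adjProdSnd).comp e.toAdjunction).ofNatIsoLeft
      (coprodOverFunctorInitialIso A B)
  (e.symm.toAdjunction.comp (Over.mkIdTerminal (X := A)).prodSndAdj).ofNatIsoLeft
    ((Over.mapPullbackAdj coprod.inr).rightAdjointUniq mapInrAdj).symm

end Extensive

noncomputable def succPolynomialIso [HasTerminal E] [HasPullbacks E] [HasBinaryCoproducts E] :
    (Over.equivalenceOfIsTerminal terminalIsTerminal).inverse ⋙
        (Over.pullback (𝟙 (⊤_ E)) ⋙ inrPushforward (⊤_ E) (⊤_ E) ⋙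
          Over.map (terminal.from _)) ⋙
        (Over.equivalenceOfIsTerminal terminalIsTerminal).functor ≅
      coprod.functor.obj (⊤_ E) :=
  Functor.isoWhiskerLeft _ (Functor.isoWhiskerRight
      (Functor.isoWhiskerRight Over.pullbackId _ ≪≫ Functor.leftUnitor _) _) ≪≫
    NatIso.ofComponents (fun _ => Iso.refl _) fun _ =>
      (Category.comp_id _).trans (Category.id_comp _).symm

theorem nno_of_wTypes_general [HasFiniteLimits E] [HasFiniteCoproducts E] (hext : IsExtensive E)
    (hW : HasWTypes E) :
    HasInitial (Endofunctor.Algebra (coprod.functor.obj (⊤_ E))) := by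
  have : (coprodOverFunctor (⊤_ E) (⊤_ E)).IsEquivalence := hext _ _
  have hP := hW (𝟙 _) coprod.inr (terminal.from _) _ ⟨pullbackInrPushforwardAdj (⊤_ E) (⊤_ E)⟩
  exact ((Endofunctor.Algebra.equivConj _ _).trans
    (Endofunctor.Algebra.equivOfNatIso succPolynomialIso)).hasInitial_iff.mp hP

/-- an extensive locally cartesian closed category with W-types has a natural
number object, i.e. an initial algebra for the endofunctor `X ↦ 1 ⨿ X`. -/
theorem nno_of_wTypes [HasFiniteLimits E] [HasFiniteCoproducts E] (hext : IsExtensive E)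
    (hlcc : IsLCC E) (hW : HasWTypes E) :
    HasInitial (Endofunctor.Algebra (coprod.functor.obj (⊤_ E))) :=
  nno_of_wTypes_general hext hW
end

section
/- Let E and F be locally cartesian closed categories with W-types and H : E → F a locally cartesian closed functor. If H has a right adjoint, then H preserves W-types: for every endopolynomial I ←h– A –g→ B –f→ I in E, the functor Alg(P_{f,g,h}) → Alg(P_{Hf,Hg,Hh}) induced by the strong morphism (H/I, σ) : P_{f,g,h} → P_{Hf,Hg,Hh} preserves initial objects. -/
open CategoryTheory CategoryTheory.Limits

universe v u v₂ u₂

variable {E : Type u} [Category.{v} E] {F : Type u₂} [Category.{v₂} F]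

/-- A finite-limit-preserving functor `H` preserves pushforwards if for every `f : I ⟶ J`
and pushforwards `f_*` (right adjoint to `f*` in `E`) and `(Hf)_*` (right adjoint to `(Hf)*`
in `F`), the sliced functors of `H` commute with the pushforwards up to isomorphism. -/
def PreservesPushforwards [HasFiniteLimits E] [HasFiniteLimits F] (H : E ⥤ F) : Prop :=
  ∀ ⦃I J : E⦄ (f : I ⟶ J) (fStar : Over I ⥤ Over J)
    (fStar' : Over (H.obj I) ⥤ Over (H.obj J)),
    Nonempty (Over.pullback f ⊣ fStar) → Nonempty (Over.pullback (H.map f) ⊣ fStar') →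
      Nonempty (fStar ⋙ Over.post H ≅ Over.post H ⋙ fStar')

/-- The functor `Alg(P) ⥤ Alg(Q)` induced by a lax morphism `(H, σ) : P → Q` of endofunctors,
sending `(X, s)` to `(HX, Hs ∘ σ X)`. -/
@[simps]
def algMap {P : E ⥤ E} {Q : F ⥤ F} (H : E ⥤ F) (σ : H ⋙ Q ⟶ P ⋙ H) :
    Endofunctor.Algebra P ⥤ Endofunctor.Algebra Q where
  obj A := ⟨H.obj A.a, σ.app A.a ≫ H.map A.str⟩
  map {A B} f :=
    { f := H.map f.f
      h := by
        have h1 := σ.naturality f.f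
        dsimp at h1 ⊢
        rw [← Category.assoc, h1, Category.assoc, Category.assoc, ← H.map_comp, f.h,
          H.map_comp] }
  map_id A := by ext; simp
  map_comp f g := by ext; simp

/-- `H` preserves W-types: for every endopolynomial `I ←h– A –g→ B –f→ I` of `E` and every
strong morphism `(H/I, σ) : P_{f,g,h} → P_{Hf,Hg,Hh}`, the induced functor
`Alg(P_{f,g,h}) ⥤ Alg(P_{Hf,Hg,Hh})` preserves initial objects. -/
def PreservesWTypes [HasFiniteLimits E] [HasFiniteLimits F] (H : E ⥤ F) : Prop :=
  ∀ ⦃I A B : E⦄ (h : A ⟶ I) (g : A ⟶ B) (f : B ⟶ I)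
    (gStar : Over A ⥤ Over B) (_ : Nonempty (Over.pullback g ⊣ gStar))
    (gStar' : Over (H.obj A) ⥤ Over (H.obj B))
    (_ : Nonempty (Over.pullback (H.map g) ⊣ gStar'))
    (σ : Over.post H ⋙ (Over.pullback (H.map h) ⋙ gStar' ⋙ Over.map (H.map f)) ≅
        (Over.pullback h ⋙ gStar ⋙ Over.map f) ⋙ Over.post H)
    (W : Endofunctor.Algebra (Over.pullback h ⋙ gStar ⋙ Over.map f)),
    Nonempty (IsInitial W) → Nonempty (IsInitial ((algMap (Over.post H) σ.hom).obj W))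

/-!
Since `H ⊣ R` and `E` has pullbacks, the slice functor `H/I` has a right adjoint
(`Over.post R` followed by pullback along the unit at `I`). An adjunction `K ⊣ G` lifts along any
strong morphism `(K, σ) : P → Q` to an adjunction between the algebra categories: the right
adjoint equips `G Y` with the structure map adjunct to `K P G Y ≅ Q K G Y ⟶ Q Y ⟶ Y`, and a map
`W ⟶ G Y` is a `P`-algebra map exactly when its adjunct `K W ⟶ Y` is a `Q`-algebra map. Being a
left adjoint, the induced functor `Alg P ⥤ Alg Q` preserves initial objects.
-/

namespace CategoryTheory.Endofunctor.Algebra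

variable {C : Type*} [Category* C] {D : Type*} [Category* D] {P : C ⥤ C} {Q : D ⥤ D}
  {K : C ⥤ D} {G : D ⥤ C}

def liftStr (adj : K ⊣ G) (σ : K ⋙ Q ≅ P ⋙ K) (T : Algebra Q) :
    P.obj (G.obj T.a) ⟶ G.obj T.a :=
  adj.homEquiv _ _ (σ.inv.app _ ≫ Q.map (adj.counit.app T.a) ≫ T.str)

lemma homEquiv_symm_map_comp_liftStr (adj : K ⊣ G) (σ : K ⋙ Q ≅ P ⋙ K) {X : C}
    (T : Algebra Q) (x : X ⟶ G.obj T.a) :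
    (adj.homEquiv _ _).symm (P.map x ≫ liftStr adj σ T) =
      σ.inv.app X ≫ Q.map ((adj.homEquiv _ _).symm x) ≫ T.str := by
  have := σ.inv.naturality x
  dsimp at this
  rw [adj.homEquiv_naturality_left_symm, liftStr, Equiv.symm_apply_apply,
    reassoc_of% this, adj.homEquiv_counit, Q.map_comp_assoc]

lemma map_comp_liftStr_eq_iff (adj : K ⊣ G) (σ : K ⋙ Q ≅ P ⋙ K) {W : Algebra P}
    {T : Algebra Q} {y : K.obj W.a ⟶ T.a} {x : W.a ⟶ G.obj T.a} (hxy : adj.homEquiv _ _ y = x) :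
    P.map x ≫ liftStr adj σ T = W.str ≫ x ↔
      Q.map y ≫ T.str = (σ.hom.app W.a ≫ K.map W.str) ≫ y := by
  subst hxy
  rw [← (adj.homEquiv _ _).symm.injective.eq_iff, homEquiv_symm_map_comp_liftStr,
    adj.homEquiv_naturality_left_symm, Equiv.symm_apply_apply, Category.assoc]
  exact (σ.app W.a).inv_comp_eq

def liftRightAdjoint (adj : K ⊣ G) (σ : K ⋙ Q ≅ P ⋙ K) : Algebra Q ⥤ Algebra P where
  obj T := ⟨G.obj T.a, liftStr adj σ T⟩
  map u :=
    { f := G.map u.f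
      h := by
        rw [liftStr, liftStr, ← adj.homEquiv_naturality_left, ← adj.homEquiv_naturality_right]
        have := σ.inv.naturality (G.map u.f)
        dsimp at this
        simp [reassoc_of% this, ← Q.map_comp_assoc] }

def liftAdjunction (adj : K ⊣ G) (σ : K ⋙ Q ≅ P ⋙ K) :
    algMap K σ.hom ⊣ liftRightAdjoint adj σ :=
  Adjunction.mkOfHomEquiv
    { homEquiv W T :=
        { toFun u := ⟨adj.homEquiv _ _ u.f, (map_comp_liftStr_eq_iff adj σ rfl).2 u.h⟩
          invFun v := ⟨(adj.homEquiv _ _).symm v.f,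
            (map_comp_liftStr_eq_iff adj σ ((adj.homEquiv _ _).apply_symm_apply v.f)).1 v.h⟩
          left_inv u := by ext; exact (adj.homEquiv _ _).symm_apply_apply _
          right_inv v := by ext; exact (adj.homEquiv _ _).apply_symm_apply _ }
      homEquiv_naturality_left_symm f g := by
        ext; exact adj.homEquiv_naturality_left_symm _ _
      homEquiv_naturality_right f g := by
        ext; exact adj.homEquiv_naturality_right _ _ }

end CategoryTheory.Endofunctor.Algebra

theorem left_adjoint_preserves_wTypes_general [HasFiniteLimits E] [HasFiniteLimits F]
    (H : E ⥤ F) (R : F ⥤ E) (adj : H ⊣ R) :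
    PreservesWTypes H := by
  intro I A B h g f gStar _ gStar' _ σ W ⟨hW⟩
  have := (Endofunctor.Algebra.liftAdjunction (Over.postAdjunctionLeft (X := I) adj)
    σ).leftAdjoint_preservesColimits
  exact ⟨hW.isInitialObj _⟩

/-- a locally cartesian closed functor between locally cartesian closed
categories with W-types which has a right adjoint preserves W-types. -/
theorem left_adjoint_preserves_wTypes [HasFiniteLimits E] [HasFiniteLimits F]
    (hE : IsLCC E) (hF : IsLCC F) (hWE : HasWTypes E) (hWF : HasWTypes F)
    (H : E ⥤ F) [PreservesFiniteLimits H] (hpush : PreservesPushforwards H)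
    (R : F ⥤ E) (adj : H ⊣ R) :
    PreservesWTypes H :=
  left_adjoint_preserves_wTypes_general H R adj
end

section
/- Let P : E → E and Q : F → F be endofunctors and (H, σ) : P → Q a strong morphism (so σ : QH ⇒ HP is a natural isomorphism). Suppose H has a right adjoint R : F → E. Then the induced functor H̃ : Alg(P) → Alg(Q), given by H̃(X, s) = (HX, Hs ∘ σ(X)), has a right adjoint R̃ : Alg(Q) → Alg(P) satisfying U_P ∘ R̃ = R ∘ U_Q. -/
/-!
The right adjoint is itself induced by a lax morphism `(R, τ) : Q → P`, where
`τ : R ⋙ P ⟶ Q ⋙ R` is the mate of `σ⁻¹` with respect to `H ⊣ R` on both sides. By the mate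
identities (and `σ⁻¹ ≫ σ = 𝟙` for the unit) the unit and counit of `H ⊣ R` are morphisms of
algebras, and the triangle identities hold in `Alg` because they hold after forgetting the
structure maps.
-/

open CategoryTheory CategoryTheory.Limits

universe v u v₂ u₂

variable {E : Type u} [Category.{v} E] {F : Type u₂} [Category.{v₂} F]

section


def algMapAdjunction {P : E ⥤ E} {Q : F ⥤ F} {H : E ⥤ F} {R : F ⥤ E} (adj : H ⊣ R)
    (σ : H ⋙ Q ⟶ P ⋙ H) (τ : R ⋙ P ⟶ Q ⋙ R)
    (hunit : ∀ X, P.map (adj.unit.app X) ≫ τ.app (H.obj X) ≫ R.map (σ.app X) =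
      adj.unit.app (P.obj X))
    (hcounit : ∀ Y, σ.app (R.obj Y) ≫ H.map (τ.app Y) ≫ adj.counit.app (Q.obj Y) =
      Q.map (adj.counit.app Y)) :
    algMap H σ ⊣ algMap R τ where
  unit :=
    { app A :=
        { f := adj.unit.app A.a
          h := by
            change P.map (adj.unit.app A.a) ≫ τ.app _ ≫ R.map (σ.app _ ≫ H.map A.str) =
              A.str ≫ adj.unit.app A.a
            simp [reassoc_of% hunit] }
      naturality _ _ f := Endofunctor.Algebra.Hom.ext (adj.unit.naturality f.f) }
  counit :=
    { app B :=
        { f := adj.counit.app B.a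
          h := by
            change Q.map (adj.counit.app B.a) ≫ B.str =
              (σ.app _ ≫ H.map (τ.app _ ≫ R.map B.str)) ≫ adj.counit.app B.a
            simp [reassoc_of% hcounit] }
      naturality _ _ f := Endofunctor.Algebra.Hom.ext (adj.counit.naturality f.f) }
  left_triangle_components A := Endofunctor.Algebra.Hom.ext (adj.left_triangle_components A.a)
  right_triangle_components B := Endofunctor.Algebra.Hom.ext (adj.right_triangle_components B.a)

/-- for a strong morphism `(H, σ) : P → Q` of endofunctors such that `H` has a
right adjoint `R`, the induced functor `H̃ : Alg(P) ⥤ Alg(Q)` has a right adjoint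
`R̃ : Alg(Q) ⥤ Alg(P)` with `U_P ∘ R̃ = R ∘ U_Q`. -/
theorem algebra_adjoint_lifting (P : E ⥤ E) (Q : F ⥤ F) (H : E ⥤ F)
    (σ : H ⋙ Q ≅ P ⋙ H) (R : F ⥤ E) (adj : H ⊣ R) :
    ∃ Rt : Endofunctor.Algebra Q ⥤ Endofunctor.Algebra P,
      Nonempty (algMap H σ.hom ⊣ Rt) ∧
        Rt ⋙ Endofunctor.Algebra.forget P = Endofunctor.Algebra.forget Q ⋙ R := by
  let τ : R ⋙ P ⟶ Q ⋙ R := mateEquiv adj adj σ.inv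
  refine ⟨algMap R τ, ⟨algMapAdjunction adj σ.hom τ (fun X => ?_) (fun Y => ?_)⟩, rfl⟩
  · rw [reassoc_of% unit_mateEquiv adj adj σ.inv X]
    simp
  · rw [mateEquiv_counit adj adj σ.inv Y]
    simp
end
end

section
/- Let E be a locally cartesian closed category with finite coproducts. The following conditions are equivalent: (1) E is extensive; (2) binary coproducts in E are disjoint; (3) the binary coproduct 1 + 1 of the terminal object with itself is disjoint. -/
open CategoryTheory CategoryTheory.Limits

universe v u

variable {E : Type u} [Category.{v} E]

/-- The binary coproduct `A + B` is disjoint: the coprojections are monomorphisms and their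
pullback is an initial object. -/
def DisjointCoprod [HasBinaryCoproducts E] [HasPullbacks E] (A B : E) : Prop :=
  Mono (coprod.inl : A ⟶ A ⨿ B) ∧ Mono (coprod.inr : B ⟶ A ⨿ B) ∧
    Nonempty (IsInitial (pullback (coprod.inl : A ⟶ A ⨿ B) (coprod.inr : B ⟶ A ⨿ B)))


/-!
Pullback functors of a locally cartesian closed category are left adjoints, so they preserve
binary coproducts and initial objects: coproducts are universal and initial objects are strict.
Extensivity then amounts to the van Kampen property of `1 + 1`, i.e. to the squares
`X ⟶ X + Y` over `1 ⟶ 1 + 1` (and symmetrically) being pullbacks.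

If `1 + 1` is disjoint, the pullback `P ↪ X + Y` of `inl : 1 ⟶ 1 + 1` pulls back along
`inr : Y ⟶ X + Y` to an object over `1 ×_{1+1} 1 = 0`, hence to `0`; by universality
`P ≅ P ×_{X+Y} X`, and the projection `P ×_{X+Y} X ⟶ X` is a monomorphism split by `X ⟶ P`,
so `X ≅ P`. If instead `E/A × E/B ⥤ E/(A + B)` is an equivalence, full faithfulness alone
produces the pullback squares, and finitary extensive categories have disjoint coproducts.
-/

namespace IsLCC

variable [HasFiniteLimits E]

theorem hasStrictInitialObjects (hlcc : IsLCC E) : HasStrictInitialObjects E where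
  out {I A} f hI := by
    have := hlcc f
    have hI' : IsInitial (Over.mk (𝟙 I)) :=
      IsInitial.ofUniqueHom (fun Y => Over.homMk (hI.to Y.left) (hI.hom_ext _ _))
        fun _ _ => Over.OverMorphism.ext (hI.hom_ext _ _)
    have hP : IsInitial (pullback (𝟙 I) f) :=
      (hI'.isInitialObj (Over.pullback f)).isInitialObj (Over.forget A)
    have hA : IsInitial A := hP.ofIso (asIso (pullback.snd _ _))
    exact ⟨⟨hI.to A, hA.hom_ext _ _, hI.hom_ext _ _⟩⟩

variable [HasBinaryCoproducts E]

noncomputable def isColimitPullbackCofan (hlcc : IsLCC E) {A B Z : E} (f : Z ⟶ A ⨿ B) :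
    IsColimit (BinaryCofan.mk (pullback.snd coprod.inl f) (pullback.snd coprod.inr f)) := by
  have := hlcc f
  let i₁ : Over.mk (coprod.inl : A ⟶ A ⨿ B) ⟶ Over.mk (𝟙 _) := Over.homMk coprod.inl
  let i₂ : Over.mk (coprod.inr : B ⟶ A ⨿ B) ⟶ Over.mk (𝟙 _) := Over.homMk coprod.inr
  have hc : IsColimit (BinaryCofan.mk i₁ i₂) :=
    isColimitOfReflectsOfMapIsColimit (Over.forget _) _ _ (coprodIsCoprod A B)
  have : IsIso (pullback.snd (Over.mk (𝟙 (A ⨿ B))).hom f) :=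
    inferInstanceAs (IsIso (pullback.snd (𝟙 _) f))
  refine (mapIsColimitOfPreservesOfIsColimit (Over.pullback f ⋙ Over.forget Z) _ _ hc).ofIsoColimit
    (BinaryCofan.ext (@asIso _ _ _ _ (pullback.snd (Over.mk (𝟙 (A ⨿ B))).hom f) this) ?_ ?_) <;>
    exact pullback.lift_snd _ _ _

theorem isPullback_inl_coprod_map_of_disjointCoprod (hlcc : IsLCC E) {X Y X' Y' : E}
    (hD : DisjointCoprod X Y) (f : X' ⟶ X) (g : Y' ⟶ Y) :
    IsPullback (coprod.inl : X' ⟶ X' ⨿ Y') f (coprod.map f g) coprod.inl := by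
  have := hlcc.hasStrictInitialObjects
  have := hD.1
  let m := pullback.fst (coprod.map f g) (coprod.inl : X ⟶ X ⨿ Y)
  have hinr : IsInitial (pullback (coprod.inr : Y' ⟶ X' ⨿ Y') m) := by
    refine IsInitial.ofStrict (pullback.lift (pullback.snd _ m ≫ pullback.snd _ _)
      (pullback.fst _ m ≫ g) ?_) hD.2.2.some
    simp only [Category.assoc, ← pullback.condition, m]
    simp [← pullback.condition_assoc]
  have : IsIso (pullback.snd (coprod.inl : X' ⟶ X' ⨿ Y') m) :=
    (BinaryCofan.isColimit_iff_isIso_inl hinr _).mp ⟨hlcc.isColimitPullbackCofan m⟩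
  let c : X' ⟶ pullback (coprod.map f g) coprod.inl := pullback.lift coprod.inl f (by simp)
  have hcm : 𝟙 X' ≫ coprod.inl = c ≫ m := by
    rw [Category.id_comp]
    exact (pullback.lift_fst _ _ _).symm
  have : IsSplitEpi (pullback.fst (coprod.inl : X' ⟶ X' ⨿ Y') m) :=
    ⟨⟨pullback.lift _ _ hcm, pullback.lift_fst _ _ _⟩⟩
  have : IsIso (pullback.fst (coprod.inl : X' ⟶ X' ⨿ Y') m) := isIso_of_mono_of_isSplitEpi _
  have : IsIso c := by
    have := IsIso.of_isIso_fac_right (pullback.lift_fst _ _ hcm)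
    rw [← pullback.lift_snd _ _ hcm]
    infer_instance
  exact IsPullback.of_iso_pullback ⟨by simp⟩ (asIso c) (pullback.lift_fst _ _ _)
    (pullback.lift_snd _ _ _)

end IsLCC

theorem isPullback_inr_coprod_map_of_inl [HasBinaryCoproducts E] {X Y X' Y' : E}
    (f : X' ⟶ X) (g : Y' ⟶ Y)
    (h : IsPullback (coprod.inl : Y' ⟶ Y' ⨿ X') g (coprod.map g f) coprod.inl) :
    IsPullback (coprod.inr : Y' ⟶ X' ⨿ Y') g (coprod.map f g) coprod.inr := by
  have braid : IsPullback (coprod.braiding Y' X').hom (coprod.map g f) (coprod.map f g)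
      (coprod.braiding Y X).hom :=
    IsPullback.of_horiz_isIso ⟨by ext <;> simp⟩
  simpa [coprod.inl_desc] using h.paste_horiz braid

theorem IsLCC.finitaryExtensive_of_isPullback_inl [HasFiniteLimits E] [HasFiniteCoproducts E]
    (hlcc : IsLCC E)
    (h : ∀ X Y : E, IsPullback (coprod.inl : X ⟶ X ⨿ Y) (terminal.from X)
      (coprod.map (terminal.from X) (terminal.from Y)) coprod.inl) :
    FinitaryExtensive E := by
  rw [finitaryExtensive_iff_of_isTerminal E (⊤_ E) terminalIsTerminal _ (coprodIsCoprod _ _)]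
  refine BinaryCofan.isVanKampen_mk _ (fun X Y => BinaryCofan.mk coprod.inl coprod.inr)
    (fun X Y => coprodIsCoprod X Y) (fun f g => (IsPullback.of_hasPullback g f).flip.cone)
    (fun f g => (IsPullback.of_hasPullback g f).flip.isLimit) ?_ hlcc.isColimitPullbackCofan
  intro X Y αX αY f hX hY
  obtain rfl : αX = terminal.from X := Subsingleton.elim _ _
  obtain rfl : αY = terminal.from Y := Subsingleton.elim _ _
  obtain rfl : f = coprod.map (terminal.from X) (terminal.from Y) := by
    apply coprod.hom_ext
    · exact hX.symm.trans (coprod.inl_map _ _).symm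
    · exact hY.symm.trans (coprod.inr_map _ _).symm
  exact ⟨h X Y, isPullback_inr_coprod_map_of_inl _ _ (h Y X)⟩

theorem isPullback_inl_coprod_map_of_full_faithful [HasBinaryCoproducts E] [HasInitial E]
    {A B : E} [(coprodOverFunctor A B).Full] [(coprodOverFunctor A B).Faithful]
    (X : Over A) (Y : Over B) :
    IsPullback (coprod.inl : X.left ⟶ X.left ⨿ Y.left) X.hom (coprod.map X.hom Y.hom)
      coprod.inl := by
  let F := coprodOverFunctor A B
  have map_left {P Q : Over A × Over B} (p : P ⟶ Q) :
      (F.map p).left = coprod.map p.1.left p.2.left := rfl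
  let desc (s : PullbackCone (coprod.map X.hom Y.hom) coprod.inl) :
      F.obj (Over.mk s.snd, Over.mk (initial.to B)) ⟶ F.obj (X, Y) :=
    Over.homMk (coprod.desc s.fst (initial.to (X.left ⨿ Y.left))) (by
      apply coprod.hom_ext
      · change coprod.inl ≫ coprod.desc s.fst _ ≫ coprod.map X.hom Y.hom =
          coprod.inl ≫ coprod.map s.snd (initial.to B)
        rw [coprod.inl_desc_assoc, coprod.inl_map, s.condition]
      · exact initial.hom_ext _ _)
  let lift s := F.preimage (desc s)
  have lift_inl (s : PullbackCone (coprod.map X.hom Y.hom) coprod.inl) :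
      (lift s).1.left ≫ coprod.inl = s.fst := by
    have := congrArg (coprod.inl ≫ Over.Hom.left ·) (F.map_preimage (desc s))
    simpa [F, coprodOverFunctor, desc, lift, coprod.inl_desc] using this
  refine IsPullback.of_isLimit (PullbackCone.IsLimit.mk (coprod.inl_map _ _)
    (fun s => (lift s).1.left) lift_inl (fun s => Over.w (lift s).1) fun s m hm₁ hm₂ => ?_)
  have : F.map (Over.homMk m hm₂, (lift s).2) = F.map (lift s) := by
    ext
    simp only [map_left]
    apply coprod.hom_ext
    · simp only [coprod.inl_map, lift_inl, Over.homMk_left, hm₁]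
    · simp only [coprod.inr_map, Over.homMk_left]
  exact congrArg (·.1.left) (F.map_injective this)

theorem IsLCC.finitaryExtensive_of_isExtensive [HasFiniteLimits E] [HasFiniteCoproducts E]
    (hlcc : IsLCC E) (hext : IsExtensive E) : FinitaryExtensive E :=
  hlcc.finitaryExtensive_of_isPullback_inl fun X Y =>
    have := hext (⊤_ E) (⊤_ E)
    isPullback_inl_coprod_map_of_full_faithful (Over.mk (terminal.from X))
      (Over.mk (terminal.from Y))

theorem FinitaryExtensive.isPullback_coprod_map [FinitaryExtensive E] {X Y X' Y' : E}
    (f : X' ⟶ X) (g : Y' ⟶ Y) :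
    IsPullback (coprod.inl : X' ⟶ X' ⨿ Y') f (coprod.map f g) coprod.inl ∧
      IsPullback (coprod.inr : Y' ⟶ X' ⨿ Y') g (coprod.map f g) coprod.inr := by
  have H := FinitaryExtensive.van_kampen' _ (coprodIsCoprod X Y)
  rw [BinaryCofan.isVanKampen_iff] at H
  exact (H (BinaryCofan.mk coprod.inl coprod.inr) f g (coprod.map f g) (coprod.inl_map _ _).symm
    (coprod.inr_map _ _).symm).mp ⟨coprodIsCoprod _ _⟩

instance coprodOverFunctor_faithful [HasBinaryCoproducts E] [MonoCoprod E] (A B : E) :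
    (coprodOverFunctor A B).Faithful where
  map_injective {P Q} p q h := by
    have h' : coprod.map p.1.left p.2.left = coprod.map q.1.left q.2.left :=
      congrArg Over.Hom.left h
    have h₁ := congrArg (coprod.inl ≫ ·) h'
    have h₂ := congrArg (coprod.inr ≫ ·) h'
    simp only [coprod.inl_map, coprod.inr_map, cancel_mono] at h₁ h₂
    exact Prod.ext (Over.OverMorphism.ext h₁) (Over.OverMorphism.ext h₂)

instance coprodOverFunctor_full [FinitaryExtensive E] (A B : E) : (coprodOverFunctor A B).Full where
  map_surjective {P Q} k := by
    have hk : k.left ≫ coprod.map Q.1.hom Q.2.hom = coprod.map P.1.hom P.2.hom := Over.w k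
    obtain ⟨hl, hr⟩ := FinitaryExtensive.isPullback_coprod_map Q.1.hom Q.2.hom
    have w₁ : (coprod.inl ≫ k.left) ≫ coprod.map Q.1.hom Q.2.hom = P.1.hom ≫ coprod.inl :=
      (Category.assoc _ _ _).trans ((congrArg (coprod.inl ≫ ·) hk).trans (coprod.inl_map _ _))
    have w₂ : (coprod.inr ≫ k.left) ≫ coprod.map Q.1.hom Q.2.hom = P.2.hom ≫ coprod.inr :=
      (Category.assoc _ _ _).trans ((congrArg (coprod.inr ≫ ·) hk).trans (coprod.inr_map _ _))
    refine ⟨(Over.homMk (hl.lift _ _ w₁) (hl.lift_snd _ _ _),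
      Over.homMk (hr.lift _ _ w₂) (hr.lift_snd _ _ _)), ?_⟩
    ext
    apply coprod.hom_ext <;> simp [coprodOverFunctor]

instance coprodOverFunctor_essSurj [FinitaryPreExtensive E] [HasPullbacks E] (A B : E) :
    (coprodOverFunctor A B).EssSurj where
  mem_essImage W := by
    obtain ⟨hc⟩ := FinitaryPreExtensive.universal' _ (coprodIsCoprod A B)
      (BinaryCofan.mk (pullback.snd coprod.inl W.hom) (pullback.snd coprod.inr W.hom))
      (mapPair (pullback.fst _ _) (pullback.fst _ _)) W.hom
      (by ext ⟨⟨⟩⟩ <;> exact pullback.condition) (.of_discrete _)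
      (by rintro ⟨⟨⟩⟩ <;> exact (IsPullback.of_hasPullback _ _).flip)
    refine ⟨(Over.mk (pullback.fst coprod.inl W.hom), Over.mk (pullback.fst coprod.inr W.hom)),
      ⟨Over.isoMk ((coprodIsCoprod _ _).coconePointUniqueUpToIso hc) ?_⟩⟩
    refine (coprodIsCoprod _ _).hom_ext fun j => ?_
    erw [IsColimit.comp_coconePointUniqueUpToIso_hom_assoc]
    rcases j with ⟨⟨⟩⟩
    · exact pullback.condition.symm.trans (coprod.inl_map _ _).symm
    · exact pullback.condition.symm.trans (coprod.inr_map _ _).symm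

theorem isExtensive_of_finitaryExtensive [HasPullbacks E] [FinitaryExtensive E] : IsExtensive E :=
  fun _ _ => { }

theorem disjointCoprod_of_finitaryExtensive [HasPullbacks E] [FinitaryExtensive E] (A B : E) :
    DisjointCoprod A B :=
  ⟨inferInstance, inferInstance,
    ⟨initialIsInitial.ofIso (FinitaryExtensive.isPullback_initial_to_binaryCofan
      (coprodIsCoprod A B)).isoPullback⟩⟩

/-- for a locally cartesian closed category `E` with finite coproducts, the
following are equivalent: (1) `E` is extensive; (2) binary coproducts in `E` are disjoint;
(3) the coproduct `1 + 1` is disjoint. -/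
theorem extensive_iff_disjoint_coproducts [HasFiniteLimits E] [HasFiniteCoproducts E]
    (hlcc : IsLCC E) :
    (IsExtensive E ↔ ∀ A B : E, DisjointCoprod A B) ∧
      ((∀ A B : E, DisjointCoprod A B) ↔ DisjointCoprod (⊤_ E) (⊤_ E)) := by
  have of_disjoint_terminal (hD : DisjointCoprod (⊤_ E) (⊤_ E)) : FinitaryExtensive E :=
    hlcc.finitaryExtensive_of_isPullback_inl fun _ _ =>
      hlcc.isPullback_inl_coprod_map_of_disjointCoprod hD _ _
  refine ⟨⟨fun hext => ?_, fun hD => ?_⟩, ⟨fun hD => hD _ _, fun hD => ?_⟩⟩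
  · have := hlcc.finitaryExtensive_of_isExtensive hext
    exact disjointCoprod_of_finitaryExtensive
  · have := of_disjoint_terminal (hD _ _)
    exact isExtensive_of_finitaryExtensive
  · have := of_disjoint_terminal hD
    exact disjointCoprod_of_finitaryExtensive
end

section
/- Let E and F be categories with finite limits, G a cartesian comonad on E, H a cartesian comonad on F, and (S, σ) : G → H an oplax morphism of comonads, with T : E_G → F_H the corresponding lifted functor satisfying U_H ∘ T = S ∘ U_G. If S has a right adjoint R : F → E with unit i and counit e, then T has a right adjoint, which is given by the equalizer of the coreflexive pair φ₁, φ₂ : F_G R U_H ⇒ F_G R H U_H, where φ₁ = F_G σ̃ U_H ∘ η_G F_G R U_H (with σ̃ : GR ⇒ RH the mate RHe ∘ RσR ∘ iGR of σ), φ₂ = F_G R U_H η_H, and both φ₁ and φ₂ are sections of the common retraction F_G R ε_H U_H. -/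
/-!
A coalgebra map `T A ⟶ B` is a map `k : S A ⟶ B` with `(S a ≫ σ_A) ≫ H k = k ≫ b`. Transposing
`k` along `S ⊣ R` and then along `U_G ⊣ F_G` gives a coalgebra map `A ⟶ F_G R B`, and since `σ̃` is
the mate of `σ`, the compatibility condition becomes exactly that this map equalizes `φ₁` and
`φ₂`. Hence `(T A ⟶ B) ≃ (A ⟶ eq(φ₁, φ₂))` naturally in `A`, which defines the right adjoint; the
equalizer exists because `G` preserves equalizers, so `U_G` creates them. The retraction
identities come from the counit law of `σ` (in the form `σ̃ ≫ R ε_H = ε_G R`) and of `B`.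
-/

open CategoryTheory CategoryTheory.Limits

universe v u v₂ u₂

variable {E : Type u} [Category.{v} E] {F : Type u₂} [Category.{v₂} F]

/-- `(S, σ)` is an oplax morphism of comonads `G → H`. -/
def IsOplaxMorphism (G : Comonad E) (H : Comonad F) (S : E ⥤ F)
    (σ : G.toFunctor ⋙ S ⟶ S ⋙ H.toFunctor) : Prop :=
  (∀ X : E, σ.app X ≫ H.ε.app (S.obj X) = S.map (G.ε.app X)) ∧
  (∀ X : E, σ.app X ≫ H.δ.app (S.obj X) =
      S.map (G.δ.app X) ≫ σ.app (G.obj X) ≫ H.map (σ.app X))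

section
variable (G : Comonad E) (H : Comonad F) (S : E ⥤ F)
  (σ : G.toFunctor ⋙ S ⟶ S ⋙ H.toFunctor) (R : F ⥤ E) (adj : S ⊣ R)

/-- The mate `σ̃ : GR ⇒ RH` of `σ : SG ⇒ HS`, evaluated at `Y`:
`RHe ∘ RσR ∘ iGR`. -/
def sigmaTildeApp (Y : F) : G.obj (R.obj Y) ⟶ R.obj (H.obj Y) :=
  adj.unit.app (G.obj (R.obj Y)) ≫ R.map (σ.app (R.obj Y)) ≫
    R.map (H.map (adj.counit.app Y))

/-- The component at `B` of `φ₁ = F_G σ̃ U_H ∘ η_G F_G R U_H`. -/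
def phiOne (B : H.Coalgebra) :
    G.cofree.obj (R.obj (H.forget.obj B)) ⟶ G.cofree.obj (R.obj (H.obj (H.forget.obj B))) :=
  G.adj.unit.app (G.cofree.obj (R.obj (H.forget.obj B))) ≫
    G.cofree.map (sigmaTildeApp G H S σ R adj (H.forget.obj B))

/-- The component at `B` of `φ₂ = F_G R U_H η_H`. -/
def phiTwo (B : H.Coalgebra) :
    G.cofree.obj (R.obj (H.forget.obj B)) ⟶ G.cofree.obj (R.obj (H.obj (H.forget.obj B))) :=
  G.cofree.map (R.map (H.forget.map (H.adj.unit.app B)))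

/-- The component at `B` of the common retraction `F_G R ε_H U_H`. -/
def psiRetraction (B : H.Coalgebra) :
    G.cofree.obj (R.obj (H.obj (H.forget.obj B))) ⟶ G.cofree.obj (R.obj (H.forget.obj B)) :=
  G.cofree.map (R.map (H.ε.app (H.forget.obj B)))

end

namespace CategoryTheory.Comonad

variable {G : Comonad E}

lemma adj_homEquiv_apply_f (A : G.Coalgebra) {Z : E} (g : G.forget.obj A ⟶ Z) :
    (G.adj.homEquiv A Z g).f = A.a ≫ G.map g := by
  simp [Adjunction.homEquiv_unit]
  rfl

lemma adj_homEquiv_symm_apply (A : G.Coalgebra) {Z : E} (f : A ⟶ G.cofree.obj Z) :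
    (G.adj.homEquiv A Z).symm f = f.f ≫ G.ε.app Z := by
  simp [Adjunction.homEquiv_counit]
  rfl

lemma adj_unit_app_f (A : G.Coalgebra) : (G.adj.unit.app A).f = A.a := by
  simp [adj_unit]
  rfl

lemma adj_counit_app (X : E) : G.adj.counit.app X = G.ε.app X := by
  simp [adj_counit]
  rfl

lemma hom_cofree_ext {A : G.Coalgebra} {Z : E} {f g : A ⟶ G.cofree.obj Z}
    (h : f.f ≫ G.ε.app Z = g.f ≫ G.ε.app Z) : f = g :=
  (G.adj.homEquiv A Z).symm.injective (by rwa [adj_homEquiv_symm_apply, adj_homEquiv_symm_apply])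

def Coalgebra.homEquivOfHEq {C B : G.Coalgebra} {X : E} {a : X ⟶ G.obj X}
    (hA : C.A = X) (ha : HEq C.a a) :
    (C ⟶ B) ≃ { k : X ⟶ B.A // a ≫ G.map k = k ≫ B.a } where
  toFun m := ⟨eqToHom hA.symm ≫ m.f, by
    subst hA
    obtain rfl := eq_of_heq ha
    simp [m.h]⟩
  invFun k := ⟨eqToHom hA ≫ k.1, by
    subst hA
    obtain rfl := eq_of_heq ha
    simpa using k.2⟩
  left_inv m := by ext; simp
  right_inv k := by ext; simp

end CategoryTheory.Comonad

section Mate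

variable {G : Comonad E} {H : Comonad F} {S : E ⥤ F}
  (σ : G.toFunctor ⋙ S ⟶ S ⋙ H.toFunctor) {R : F ⥤ E} (adj : S ⊣ R)

lemma sigmaTildeApp_eq_homEquiv (Y : F) :
    sigmaTildeApp G H S σ R adj Y =
      adj.homEquiv _ _ (σ.app (R.obj Y) ≫ H.map (adj.counit.app Y)) := by
  rw [sigmaTildeApp, Adjunction.homEquiv_unit, R.map_comp]

lemma homEquiv_sigma_comp_map {X : E} {Y : F} (h : S.obj X ⟶ Y) :
    adj.homEquiv _ _ (σ.app X ≫ H.map h) =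
      G.map (adj.homEquiv X Y h) ≫ sigmaTildeApp G H S σ R adj Y := by
  set g := adj.homEquiv X Y h
  have hg : S.map g ≫ adj.counit.app Y = h := by
    simp [g, Adjunction.homEquiv_unit]
  have hσ : σ.app X ≫ H.map h = S.map (G.map g) ≫ σ.app (R.obj Y) ≫ H.map (adj.counit.app Y) := by
    rw [← hg, H.map_comp, ← Category.assoc, ← Category.assoc]
    exact congrArg (· ≫ _) (σ.naturality g).symm
  rw [hσ, adj.homEquiv_naturality_left, sigmaTildeApp_eq_homEquiv]
  rfl

lemma sigmaTildeApp_comp_map_counit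
    (hε : ∀ X : E, σ.app X ≫ H.ε.app (S.obj X) = S.map (G.ε.app X)) (Y : F) :
    sigmaTildeApp G H S σ R adj Y ≫ R.map (H.ε.app Y) = G.ε.app (R.obj Y) := by
  rw [sigmaTildeApp_eq_homEquiv, ← adj.homEquiv_naturality_right, Category.assoc]
  erw [H.counit_naturality]
  rw [reassoc_of% hε, adj.homEquiv_naturality_left, Adjunction.homEquiv_unit,
    adj.right_triangle_components, Category.comp_id]

end Mate

section Equalizer

variable {G : Comonad E} {H : Comonad F} {S : E ⥤ F}
  (σ : G.toFunctor ⋙ S ⟶ S ⋙ H.toFunctor) {R : F ⥤ E} (adj : S ⊣ R)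

-- `phiOne` and `phiTwo` live over `H.forget.obj B` and `(G.cofree.obj _).A`, which agree with
-- `B.A` and `G.obj _` only after unfolding; hence the `erw`s below.
lemma phiOne_comp_psiRetraction
    (hε : ∀ X : E, σ.app X ≫ H.ε.app (S.obj X) = S.map (G.ε.app X)) (B : H.Coalgebra) :
    phiOne G H S σ R adj B ≫ psiRetraction G H R B = 𝟙 _ := by
  rw [phiOne, psiRetraction, Category.assoc]
  erw [← G.cofree.map_comp, sigmaTildeApp_comp_map_counit σ adj hε]
  rw [← Comonad.adj_counit_app, G.adj.right_triangle_components]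

lemma phiTwo_comp_psiRetraction (B : H.Coalgebra) :
    phiTwo G H R B ≫ psiRetraction G H R B = 𝟙 _ := by
  rw [phiTwo, psiRetraction, Comonad.forget_map, Comonad.adj_unit_app_f, ← G.cofree.map_comp]
  erw [← R.map_comp, B.counit, R.map_id, G.cofree.map_id]

lemma comp_phiOne_f_comp_counit {A : G.Coalgebra} {B : H.Coalgebra}
    (f : A ⟶ G.cofree.obj (R.obj B.A)) :
    (f ≫ phiOne G H S σ R adj B).f ≫ G.ε.app _ = f.f ≫ sigmaTildeApp G H S σ R adj B.A := by
  rw [phiOne]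
  erw [Comonad.Coalgebra.comp_f, Comonad.Coalgebra.comp_f, Comonad.adj_unit_app_f,
    Comonad.cofree_map_f, Comonad.cofree_obj_a, Category.assoc, Category.assoc,
    G.counit_naturality, G.left_counit_assoc]
  rfl

lemma comp_phiTwo_f_comp_counit {A : G.Coalgebra} {B : H.Coalgebra}
    (f : A ⟶ G.cofree.obj (R.obj B.A)) :
    (f ≫ phiTwo G H R B).f ≫ G.ε.app _ = f.f ≫ G.ε.app _ ≫ R.map B.a := by
  rw [phiTwo]
  erw [Comonad.Coalgebra.comp_f, Comonad.cofree_map_f, Comonad.forget_map,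
    Comonad.adj_unit_app_f, Category.assoc, G.counit_naturality]
  rfl

lemma comp_phiOne_eq_comp_phiTwo_iff {A : G.Coalgebra} {B : H.Coalgebra}
    (f : A ⟶ G.cofree.obj (R.obj B.A)) :
    f ≫ phiOne G H S σ R adj B = f ≫ phiTwo G H R B ↔
      f.f ≫ sigmaTildeApp G H S σ R adj B.A = f.f ≫ G.ε.app _ ≫ R.map B.a := by
  rw [← comp_phiOne_f_comp_counit, ← comp_phiTwo_f_comp_counit]
  exact ⟨fun h => h ▸ rfl, Comonad.hom_cofree_ext⟩

lemma homEquiv_comp_phiOne_eq_comp_phiTwo_iff {A : G.Coalgebra} {B : H.Coalgebra}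
    (k : S.obj A.A ⟶ B.A) :
    (G.adj.comp adj).homEquiv A B.A k ≫ phiOne G H S σ R adj B =
        (G.adj.comp adj).homEquiv A B.A k ≫ phiTwo G H R B ↔
      (S.map A.a ≫ σ.app A.A) ≫ H.map k = k ≫ B.a := by
  have hf : ((G.adj.comp adj).homEquiv A B.A k).f = A.a ≫ G.map (adj.homEquiv A.A B.A k) := by
    rw [Adjunction.comp_homEquiv]
    exact Comonad.adj_homEquiv_apply_f A _
  rw [comp_phiOne_eq_comp_phiTwo_iff, hf, ← (adj.homEquiv A.A _).apply_eq_iff_eq,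
    Category.assoc, adj.homEquiv_naturality_left, homEquiv_sigma_comp_map,
    adj.homEquiv_naturality_right]
  erw [Category.assoc, Category.assoc, G.counit_naturality_assoc, A.counit_assoc]
  rfl

end Equalizer

section Lifting

variable {G : Comonad E} {H : Comonad F} {S : E ⥤ F}
  (σ : G.toFunctor ⋙ S ⟶ S ⋙ H.toFunctor) {R : F ⥤ E} (adj : S ⊣ R)
  {T : G.Coalgebra ⥤ H.Coalgebra}
  (hTobj : ∀ A : G.Coalgebra,
    (T.obj A).A = S.obj A.A ∧ HEq (T.obj A).a (S.map A.a ≫ σ.app A.A))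
  [HasEqualizers G.Coalgebra]

noncomputable def liftedHomEquiv (A : G.Coalgebra) (B : H.Coalgebra) :
    (T.obj A ⟶ B) ≃ (A ⟶ equalizer (phiOne G H S σ R adj B) (phiTwo G H R B)) :=
  ((Comonad.Coalgebra.homEquivOfHEq (hTobj A).1 (hTobj A).2).trans
      (((G.adj.comp adj).homEquiv A B.A).subtypeEquiv
        fun k => (homEquiv_comp_phiOne_eq_comp_phiTwo_iff σ adj k).symm)).trans
    (Fork.IsLimit.homIso (equalizerIsEqualizer _ _) A).symm

lemma liftedHomEquiv_comp_ι (A : G.Coalgebra) (B : H.Coalgebra) (m : T.obj A ⟶ B) :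
    liftedHomEquiv σ adj hTobj A B m ≫ equalizer.ι _ _ =
      (G.adj.comp adj).homEquiv A B.A (eqToHom (hTobj A).1.symm ≫ m.f) := by
  exact (Fork.IsLimit.lift' (equalizerIsEqualizer _ _) _ _).2

lemma liftedHomEquiv_naturality_left (hT : T ⋙ H.forget = G.forget ⋙ S)
    (A' A : G.Coalgebra) (B : H.Coalgebra) (q : A' ⟶ A) (m : T.obj A ⟶ B) :
    liftedHomEquiv σ adj hTobj A' B (T.map q ≫ m) = q ≫ liftedHomEquiv σ adj hTobj A B m := by
  apply equalizer.hom_ext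
  have hq : (T.map q).f = eqToHom (hTobj A').1 ≫ S.map q.f ≫ eqToHom (hTobj A).1.symm := by
    have h := Functor.congr_hom hT q
    simp only [Functor.comp_map, Comonad.forget_map] at h
    exact h
  rw [Category.assoc, liftedHomEquiv_comp_ι, liftedHomEquiv_comp_ι, Comonad.Coalgebra.comp_f, hq]
  simp only [Category.assoc]
  erw [eqToHom_trans_assoc, eqToHom_refl, Category.id_comp]
  exact (G.adj.comp adj).homEquiv_naturality_left q _

end Lifting

theorem comonad_adjoint_lifting_general [HasFiniteLimits E]
    (G : Comonad E) (H : Comonad F)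
    [PreservesFiniteLimits G.toFunctor]
    (S : E ⥤ F) (σ : G.toFunctor ⋙ S ⟶ S ⋙ H.toFunctor) (hσ : IsOplaxMorphism G H S σ)
    (T : G.Coalgebra ⥤ H.Coalgebra) (hT : T ⋙ H.forget = G.forget ⋙ S)
    (hTobj : ∀ A : G.Coalgebra,
      (T.obj A).A = S.obj A.A ∧ HEq (T.obj A).a (S.map A.a ≫ σ.app A.A))
    (R : F ⥤ E) (adj : S ⊣ R) :
    (∀ B : H.Coalgebra, phiOne G H S σ R adj B ≫ psiRetraction G H R B = 𝟙 _) ∧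
    (∀ B : H.Coalgebra, phiTwo G H R B ≫ psiRetraction G H R B = 𝟙 _) ∧
    ∃ Rt : H.Coalgebra ⥤ G.Coalgebra,
      Nonempty (T ⊣ Rt) ∧
      ∀ B : H.Coalgebra,
        ∃ (ι : Rt.obj B ⟶ G.cofree.obj (R.obj (H.forget.obj B)))
          (w : ι ≫ phiOne G H S σ R adj B = ι ≫ phiTwo G H R B),
          Nonempty (IsLimit (Fork.ofι ι w)) := by
  have : HasEqualizers G.Coalgebra :=
    ⟨fun D => Comonad.forget_creates_limits_of_comonad_preserves D⟩
  have he := liftedHomEquiv_naturality_left σ adj hTobj hT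
  refine ⟨phiOne_comp_psiRetraction σ adj hσ.1, phiTwo_comp_psiRetraction,
    Adjunction.rightAdjointOfEquiv _ he, ⟨Adjunction.adjunctionOfEquivRight _ he⟩,
    fun B => ⟨equalizer.ι _ _, equalizer.condition _ _, ⟨equalizerIsEqualizer _ _⟩⟩⟩

/-- adjoint lifting theorem: let `(S, σ) : G → H` be an oplax morphism of
cartesian comonads with lifted functor `T : E_G ⥤ F_H` (`U_H ∘ T = S ∘ U_G`,
`T(A, α) = (SA, σ A ∘ Sα)`). If `S` has a right adjoint `R`, then `T` has a right adjoint,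
given by the equalizer of the coreflexive pair `φ₁, φ₂ : F_G R U_H ⇒ F_G R H U_H`
(where `φ₁` is built from the mate `σ̃` of `σ` and the unit `η_G`, and `φ₂` from the unit
`η_H`), both of which are sections of the retraction `F_G R ε_H U_H`. -/
theorem comonad_adjoint_lifting [HasFiniteLimits E] [HasFiniteLimits F]
    (G : Comonad E) (H : Comonad F)
    [PreservesFiniteLimits G.toFunctor] [PreservesFiniteLimits H.toFunctor]
    (S : E ⥤ F) (σ : G.toFunctor ⋙ S ⟶ S ⋙ H.toFunctor) (hσ : IsOplaxMorphism G H S σ)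
    (T : G.Coalgebra ⥤ H.Coalgebra) (hT : T ⋙ H.forget = G.forget ⋙ S)
    (hTobj : ∀ A : G.Coalgebra,
      (T.obj A).A = S.obj A.A ∧ HEq (T.obj A).a (S.map A.a ≫ σ.app A.A))
    (R : F ⥤ E) (adj : S ⊣ R) :
    (∀ B : H.Coalgebra, phiOne G H S σ R adj B ≫ psiRetraction G H R B = 𝟙 _) ∧
    (∀ B : H.Coalgebra, phiTwo G H R B ≫ psiRetraction G H R B = 𝟙 _) ∧
    ∃ Rt : H.Coalgebra ⥤ G.Coalgebra,
      Nonempty (T ⊣ Rt) ∧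
      ∀ B : H.Coalgebra,
        ∃ (ι : Rt.obj B ⟶ G.cofree.obj (R.obj (H.forget.obj B)))
          (w : ι ≫ phiOne G H S σ R adj B = ι ≫ phiTwo G H R B),
          Nonempty (IsLimit (Fork.ofι ι w)) :=
  comonad_adjoint_lifting_general G H S σ hσ T hT hTobj R adj
end

section
/- Let C and D be categories, F₁ : C → C an endofunctor, and F₂ : C × D → D a functor. Let (W₁, s₁) be an initial F₁-algebra and (W₂, s₂) an initial algebra for the endofunctor F₂(W₁, −) : D → D. Then ((W₁, W₂), (s₁, s₂)) is an initial algebra for the endofunctor on C × D sending (X₁, X₂) to (F₁ X₁, F₂(X₁, X₂)). -/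
/-!
The first component `A₁` of an algebra `(A₁, A₂)` is an `F₁`-algebra, so it receives a unique
algebra map `g : W₁ ⟶ A₁`. Precomposing the structure map of `A₂` with `F₂(g, A₂)` makes `A₂` an
`F₂(W₁, −)`-algebra, and a pair `(g, h)` is an algebra map out of `(W₁, W₂)` exactly when
`h : W₂ ⟶ A₂` is a map of `F₂(W₁, −)`-algebras for this structure, which initiality of `W₂`
provides uniquely.
-/

open CategoryTheory CategoryTheory.Limits

universe v u v₂ u₂

/-- The endofunctor on `C × D` sending `(X₁, X₂)` to `(F₁ X₁, F₂ (X₁, X₂))`. -/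
@[simps]
def prodEndofunctor {C : Type u} [Category.{v} C] {D : Type u₂} [Category.{v₂} D]
    (F₁ : C ⥤ C) (F₂ : C × D ⥤ D) : C × D ⥤ C × D where
  obj X := (F₁.obj X.1, F₂.obj X)
  map f := (F₁.map f.1, F₂.map f)
  map_id X := by simp [prod_id]
  map_comp f g := by
    dsimp
    exact Prod.ext (F₁.map_comp f.1 g.1) (F₂.map_comp f g)

namespace prodEndofunctor

open Endofunctor
open scoped CategoryTheory.Prod

variable {C : Type u} [Category.{v} C] {D : Type u₂} [Category.{v₂} D]
  {F₁ : C ⥤ C} {F₂ : C × D ⥤ D}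

def fstAlgebra (A : Algebra (prodEndofunctor F₁ F₂)) : Algebra F₁ := ⟨A.a.1, A.str.1⟩

@[simps]
def sndAlgebra {W : C} (A : Algebra (prodEndofunctor F₁ F₂)) (u : W ⟶ A.a.1) :
    Algebra (Prod.sectR W D ⋙ F₂) :=
  ⟨A.a.2, F₂.map (u ×ₘ 𝟙 A.a.2) ≫ A.str.2⟩

def pairAlgebra (W₁ : Algebra F₁) (W₂ : Algebra (Prod.sectR W₁.a D ⋙ F₂)) :
    Algebra (prodEndofunctor F₁ F₂) :=
  ⟨(W₁.a, W₂.a), (W₁.str, W₂.str)⟩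

lemma map_sectR_comp_map_fst {X₁ Y₁ : C} {X₂ Y₂ : D} (u : X₁ ⟶ Y₁) (w : X₂ ⟶ Y₂) :
    (Prod.sectR X₁ D ⋙ F₂).map w ≫ F₂.map (u ×ₘ 𝟙 Y₂) = F₂.map (u ×ₘ w) := by
  refine (F₂.map_comp _ _).symm.trans (congrArg F₂.map ?_)
  exact Prod.ext (Category.id_comp u) (Category.comp_id w)

variable {W₁ : Algebra F₁} {W₂ : Algebra (Prod.sectR W₁.a D ⋙ F₂)}
  {A : Algebra (prodEndofunctor F₁ F₂)}

lemma sndAlgebra_hom_condition_iff (u : W₁.a ⟶ A.a.1) (w : W₂.a ⟶ A.a.2) :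
    (Prod.sectR W₁.a D ⋙ F₂).map w ≫ (sndAlgebra A u).str = W₂.str ≫ w ↔
      F₂.map (u ×ₘ w) ≫ A.str.2 = W₂.str ≫ w := by
  rw [sndAlgebra_str]
  erw [← Category.assoc, map_sectR_comp_map_fst]
  rfl

def pairHom (g₁ : W₁ ⟶ fstAlgebra A) (g₂ : W₂ ⟶ sndAlgebra A g₁.f) : pairAlgebra W₁ W₂ ⟶ A where
  f := (g₁.f, g₂.f)
  h := Prod.ext g₁.h ((sndAlgebra_hom_condition_iff g₁.f g₂.f).1 g₂.h)

def fstHom (m : pairAlgebra W₁ W₂ ⟶ A) : W₁ ⟶ fstAlgebra A where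
  f := m.f.1
  h := congrArg Prod.fst m.h

def sndHom (m : pairAlgebra W₁ W₂ ⟶ A) : W₂ ⟶ sndAlgebra A m.f.1 where
  f := m.f.2
  h := (sndAlgebra_hom_condition_iff m.f.1 m.f.2).2 (congrArg Prod.snd m.h)

def isInitialPairAlgebra (h₁ : IsInitial W₁) (h₂ : IsInitial W₂) :
    IsInitial (pairAlgebra W₁ W₂) :=
  IsInitial.ofUniqueHom
    (fun A => pairHom (h₁.to (fstAlgebra A)) (h₂.to (sndAlgebra A (h₁.to (fstAlgebra A)).f)))
    fun A m => by
      have e₁ : m.f.1 = (h₁.to (fstAlgebra A)).f := congrArg Algebra.Hom.f (h₁.hom_ext (fstHom m) _)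
      have e₂ : m.f.2 = (h₂.to (sndAlgebra A m.f.1)).f :=
        congrArg Algebra.Hom.f (h₂.hom_ext (sndHom m) _)
      rw [e₁] at e₂
      exact Algebra.Hom.ext (Prod.ext e₁ e₂)

end prodEndofunctor

/-- if `(W₁, s₁)` is an initial `F₁`-algebra and `(W₂, s₂)` an initial
`F₂(W₁, −)`-algebra, then `((W₁, W₂), (s₁, s₂))` is an initial algebra for the endofunctor
`(X₁, X₂) ↦ (F₁ X₁, F₂ (X₁, X₂))` on `C × D`. -/
theorem initial_algebra_prod {C : Type u} [Category.{v} C] {D : Type u₂} [Category.{v₂} D]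
    (F₁ : C ⥤ C) (F₂ : C × D ⥤ D)
    (W₁ : Endofunctor.Algebra F₁) (hW₁ : Nonempty (IsInitial W₁))
    (W₂ : Endofunctor.Algebra (Prod.sectR W₁.a D ⋙ F₂)) (hW₂ : Nonempty (IsInitial W₂)) :
    Nonempty (IsInitial
      (⟨(W₁.a, W₂.a), (W₁.str, W₂.str)⟩ : Endofunctor.Algebra (prodEndofunctor F₁ F₂))) := by
  exact Nonempty.map2 prodEndofunctor.isInitialPairAlgebra hW₁ hW₂
end
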